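/- arXiv:1507.06796 — 10 statements merged into one kernel-verified Lean document; each statement's English description precedes it below -/
import Mathlib

section
/- Separation lemma in (ℝ≥0∞)^n: Let n ≥ 1, let V = {y : Fin n → ℝ≥0∞ | ∀ i, 1 < y i}, and let K ⊆ (Fin n → ℝ≥0∞) be a convex set disjoint from V. Then there exist nonnegative reals a : Fin n → ℝ≥0 with ∑ i, a i = 1 such that ∑ i, (a i : ℝ≥0∞) * x i ≤ 1 for every x ∈ K and 1 < ∑ i, (a i : ℝ≥0∞) * y i for every y ∈ V. -/
/-!
The real points lying below `K`, `C = {v : ℝⁿ | ofReal ∘ v ≤ k for some k ∈ K}`, form a convex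
set disjoint from the open box `(1, ∞)ⁿ`, so Hahn–Banach separates them by a functional `ℓ`.
Being bounded below on the box, `ℓ` has nonnegative coefficients, and dividing them by
`ℓ (1, …, 1)` gives the weights. The bound passes from `C` to points of `K` with infinite
coordinates by truncation, and any convex weights put `V` strictly above `1`.
-/

open scoped ENNReal NNReal

open Set

theorem nonneg_of_forall_le_add_mul {a b x : ℝ} (h : ∀ t : ℝ, 0 ≤ t → a ≤ b + t * x) :
    0 ≤ x := by
  by_contra! hx
  obtain ⟨N, hN⟩ := exists_nat_gt ((b - a) / -x)
  have := h N N.cast_nonneg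
  rw [div_lt_iff₀ (neg_pos.2 hx)] at hN
  linarith

section

variable {ι : Type*}

theorem setOf_forall_one_lt_eq_pi : {v : ι → ℝ | ∀ i, 1 < v i} = univ.pi fun _ => Ioi 1 := by
  ext; simp

theorem le_apply_of_forall_one_lt {ℓ : (ι → ℝ) →L[ℝ] ℝ} {c : ℝ}
    (h : ∀ v : ι → ℝ, (∀ i, 1 < v i) → c < ℓ v) {v : ι → ℝ} (hv : ∀ i, 1 ≤ v i) :
    c ≤ ℓ v := by
  have hv' : v ∈ closure {v : ι → ℝ | ∀ i, 1 < v i} := by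
    simpa [setOf_forall_one_lt_eq_pi, closure_pi_set, closure_Ioi, Pi.le_def] using hv
  exact closure_minimal (fun v hv => (h v hv).le) (isClosed_le continuous_const ℓ.continuous) hv'

theorem apply_single_nonneg_of_forall_one_lt [DecidableEq ι] {ℓ : (ι → ℝ) →L[ℝ] ℝ} {c : ℝ}
    (h : ∀ v : ι → ℝ, (∀ i, 1 < v i) → c < ℓ v) (i : ι) : 0 ≤ ℓ (Pi.single i 1) := by
  refine nonneg_of_forall_le_add_mul (a := c) (b := ℓ 1) fun t ht => ?_
  have hv : ∀ j, 1 ≤ (1 + t • Pi.single i 1 : ι → ℝ) j := fun j => by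
    by_cases hj : j = i
    · subst hj; simpa
    · simp [hj]
  simpa using le_apply_of_forall_one_lt h hv

theorem exists_sum_eq_one_of_separating [Fintype ι] [DecidableEq ι] {C : Set (ι → ℝ)}
    (hC : C.Nonempty) {ℓ : (ι → ℝ) →L[ℝ] ℝ} {c : ℝ} (hℓO : ∀ v : ι → ℝ, (∀ i, 1 < v i) → c < ℓ v)
    (hℓC : ∀ v ∈ C, ℓ v ≤ c) :
    ∃ a : ι → ℝ≥0, ∑ i, a i = 1 ∧ ∀ v ∈ C, ∑ i, (a i : ℝ) * v i ≤ 1 := by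
  obtain ⟨v₀, hv₀⟩ := hC
  have hw := apply_single_nonneg_of_forall_one_lt hℓO
  have hℓ : ∀ v, ℓ v = ∑ i, v i * ℓ (Pi.single i 1) := fun v => by
    conv_lhs => rw [pi_eq_sum_univ' v]
    simp only [map_sum, map_smul, smul_eq_mul]
  have hℓ1 : ℓ 1 = ∑ i, ℓ (Pi.single i 1) := by simpa using hℓ 1
  -- a separating functional cannot vanish
  have hS : 0 < ℓ 1 := by
    refine (hℓ1 ▸ Finset.sum_nonneg fun i _ => hw i).lt_of_ne fun h0 => ?_
    have hw0 := (Finset.sum_eq_zero_iff_of_nonneg fun i _ => hw i).1 (hℓ1 ▸ h0.symm)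
    have hzero : ∀ v, ℓ v = 0 := fun v => by
      rw [hℓ v]
      exact Finset.sum_eq_zero fun i hi => by rw [hw0 i hi, mul_zero]
    linarith [hℓC v₀ hv₀, hℓO (fun _ => 2) fun _ => one_lt_two, hzero v₀, hzero fun _ => 2]
  have hcoe : ∀ i, ((ℓ (Pi.single i 1) / ℓ 1).toNNReal : ℝ) = ℓ (Pi.single i 1) / ℓ 1 :=
    fun i => Real.coe_toNNReal _ (div_nonneg (hw i) hS.le)
  refine ⟨fun i => (ℓ (Pi.single i 1) / ℓ 1).toNNReal, ?_, fun v hv => ?_⟩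
  · apply NNReal.coe_injective
    rw [NNReal.coe_sum, NNReal.coe_one, Finset.sum_congr rfl fun i _ => hcoe i, ← Finset.sum_div,
      ← hℓ1, div_self hS.ne']
  · calc ∑ i, ((ℓ (Pi.single i 1) / ℓ 1).toNNReal : ℝ) * v i = ℓ v / ℓ 1 := by
          rw [hℓ v, Finset.sum_div]
          exact Finset.sum_congr rfl fun i _ => by rw [hcoe]; ring
      _ ≤ 1 := (div_le_one hS).2 ((hℓC v hv).trans (le_apply_of_forall_one_lt hℓO fun _ => le_rfl))

theorem exists_sum_eq_one_forall_sum_mul_le_one [Fintype ι] [Nonempty ι] {C : Set (ι → ℝ)}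
    (hC : Convex ℝ C) (hCO : Disjoint C {v | ∀ i, 1 < v i}) :
    ∃ a : ι → ℝ≥0, ∑ i, a i = 1 ∧ ∀ v ∈ C, ∑ i, (a i : ℝ) * v i ≤ 1 := by
  classical
  obtain rfl | hCne := C.eq_empty_or_nonempty
  · exact ⟨Pi.single (Classical.arbitrary ι) 1, by simp, by simp⟩
  obtain ⟨f, u, hfO, hfC⟩ := geometric_hahn_banach_open
    (setOf_forall_one_lt_eq_pi ▸ convex_pi fun _ _ => convex_Ioi 1)
    (setOf_forall_one_lt_eq_pi ▸ isOpen_set_pi finite_univ fun _ _ => isOpen_Ioi) hC hCO.symm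
  exact exists_sum_eq_one_of_separating hCne (ℓ := -f) (c := -u)
    (fun v hv => by simpa using hfO v hv) fun v hv => by simpa using hfC v hv

end

namespace ENNReal

variable {ι : Type*} [Fintype ι]

theorem one_lt_sum_mul {a y : ι → ℝ≥0∞} (ha : ∑ i, a i = 1) (hy : ∀ i, 1 < y i) :
    1 < ∑ i, a i * y i := by
  have : Nonempty ι := by
    by_contra h
    simp [not_nonempty_iff.1 h] at ha
  obtain ⟨j, -, hj⟩ := Finset.univ.exists_min_image y Finset.univ_nonempty
  calc 1 < y j := hy j
    _ = ∑ i, a i * y j := by rw [← Finset.sum_mul, ha, one_mul]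
    _ ≤ ∑ i, a i * y i := by gcongr with i; exact hj i (Finset.mem_univ i)

theorem sum_mul_le_of_forall_coe_le {w x : ι → ℝ≥0∞} {c : ℝ≥0∞}
    (h : ∀ v : ι → ℝ≥0, (∀ i, (v i : ℝ≥0∞) ≤ x i) → ∑ i, w i * v i ≤ c) :
    ∑ i, w i * x i ≤ c := by
  have htrunc : ∀ i, x i = ⨆ N : ℕ, x i ⊓ N := fun i => by
    rw [← inf_iSup_eq, iSup_natCast, inf_top_eq]
  have hfin : ∀ i (N : ℕ), x i ⊓ N ≠ ∞ := fun i N => (inf_le_right.trans_lt (natCast_lt_top N)).ne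
  calc ∑ i, w i * x i = ⨆ N : ℕ, ∑ i, w i * (x i ⊓ N) := by
        conv_lhs => enter [2, i]; rw [htrunc i, mul_iSup]
        exact finsetSum_iSup_of_monotone fun i M N hMN => by gcongr
    _ ≤ c := iSup_le fun N => by
        simpa [coe_toNNReal (hfin _ N)] using
          h (fun i => (x i ⊓ N).toNNReal) fun i => by simp [coe_toNNReal (hfin i N)]

end ENNReal

theorem Convex.setOf_ofReal_le {ι : Type*} {K : Set (ι → ℝ≥0∞)} (hK : Convex ℝ≥0 K) :
    Convex ℝ {v : ι → ℝ | ∃ k ∈ K, ∀ i, ENNReal.ofReal (v i) ≤ k i} := by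
  rintro u ⟨k, hk, huk⟩ v ⟨l, hl, hvl⟩ p q hp hq hpq
  refine ⟨p.toNNReal • k + q.toNNReal • l,
    hK hk hl zero_le zero_le (by rw [← Real.toNNReal_add hp hq, hpq, Real.toNNReal_one]),
    fun i => ?_⟩
  calc ENNReal.ofReal (p * u i + q * v i)
      ≤ ENNReal.ofReal p * ENNReal.ofReal (u i) + ENNReal.ofReal q * ENNReal.ofReal (v i) := by
        rw [← ENNReal.ofReal_mul hp, ← ENNReal.ofReal_mul hq]
        exact ENNReal.ofReal_add_le
    _ ≤ ENNReal.ofReal p * k i + ENNReal.ofReal q * l i := by gcongr; exacts [huk i, hvl i]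
    _ = (p.toNNReal • k + q.toNNReal • l) i := by simp [ENNReal.smul_def, ENNReal.ofReal]

theorem convex_of_forall_mul_add_one_sub_mul_mem {ι : Type*} {K : Set (ι → ℝ≥0∞)}
    (hK : ∀ x ∈ K, ∀ y ∈ K, ∀ r : ℝ≥0, r ≤ 1 →
      (fun i => (r : ℝ≥0∞) * x i + ((1 - r : ℝ≥0) : ℝ≥0∞) * y i) ∈ K) :
    Convex ℝ≥0 K := by
  intro x hx y hy a b _ _ hab
  obtain rfl : b = 1 - a := by rw [← hab, add_tsub_cancel_left]
  convert hK x hx y hy a (hab ▸ le_self_add) using 1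
  ext i
  simp [ENNReal.smul_def]

/-- Separation lemma in `(ℝ≥0∞)^n`: if `K` is a convex subset of `(Fin n → ℝ≥0∞)`
disjoint from `V = {y | ∀ i, 1 < y i}`, then there is a convex combination
separating `K` from `V`. -/
theorem separation_lemma_ennreal (n : ℕ) (hn : 1 ≤ n)
    (V : Set (Fin n → ℝ≥0∞)) (hV : V = {y | ∀ i, 1 < y i})
    (K : Set (Fin n → ℝ≥0∞))
    (hKconv : ∀ x ∈ K, ∀ y ∈ K, ∀ r : ℝ≥0, r ≤ 1 →
      (fun i => (r : ℝ≥0∞) * x i + ((1 - r : ℝ≥0) : ℝ≥0∞) * y i) ∈ K)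
    (hdisj : Disjoint K V) :
    ∃ a : Fin n → ℝ≥0, ∑ i, a i = 1 ∧
      (∀ x ∈ K, ∑ i, (a i : ℝ≥0∞) * x i ≤ 1) ∧
      (∀ y ∈ V, 1 < ∑ i, (a i : ℝ≥0∞) * y i) := by
  subst hV
  have : Nonempty (Fin n) := ⟨⟨0, hn⟩⟩
  set C : Set (Fin n → ℝ) := {v | ∃ k ∈ K, ∀ i, ENNReal.ofReal (v i) ≤ k i}
  have hCV : Disjoint C {v | ∀ i, 1 < v i} := Set.disjoint_left.2 fun v ⟨k, hk, hvk⟩ hv =>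
    Set.disjoint_left.1 hdisj hk fun i => (ENNReal.one_lt_ofReal.2 (hv i)).trans_le (hvk i)
  obtain ⟨a, ha, haC⟩ := exists_sum_eq_one_forall_sum_mul_le_one
    (convex_of_forall_mul_add_one_sub_mul_mem hKconv).setOf_ofReal_le hCV
  refine ⟨a, ha, fun x hx => ENNReal.sum_mul_le_of_forall_coe_le fun v hv => ?_,
    fun y hy => ENNReal.one_lt_sum_mul (by exact_mod_cast ha) hy⟩
  exact_mod_cast haC (fun i => v i) ⟨x, hx, by simpa using hv⟩
end

section
/- Interpolation by convex combinations: Let D be a cone, let n ≥ 1, let φ : D → ℝ≥0∞ be a sublinear functional, and let ψ : Fin n → (D → ℝ≥0∞) be linear functionals such that (⨅ i, ψ i x) ≤ φ x for all x ∈ D. Then there exist a : Fin n → ℝ≥0 with ∑ i, a i = 1 such that for all x ∈ D, (⨅ i, ψ i x) ≤ ∑ i, (a i : ℝ≥0∞) * ψ i x and ∑ i, (a i : ℝ≥0∞) * ψ i x ≤ φ x. -/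
open scoped ENNReal NNReal
open Finset Set

/-!
The vectors `(ψ i x - φ x)_i`, more precisely all `r - q` with `r ≤ ψ x` and `φ x ≤ q` finite,
form a convex cone in `ℝⁿ` (sublinearity of `φ`, linearity of the `ψ i`), and the hypothesis
`⨅ i, ψ i x ≤ φ x` says that this cone misses the open positive orthant. Separating the two by a
hyperplane gives a nonzero functional with nonnegative coefficients which is nonpositive on the
cone; normalised, its coefficients are the weights `a`. Infinite values of `ψ i x` are recovered
because a weighted sum in `ℝ≥0∞` is the supremum of the same sums over finite minorants.
-/

theorem nonpos_of_forall_mul_le {K : Type*} [Field K] [LinearOrder K] [IsStrictOrderedRing K]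
    {c u : K} (h : ∀ t : K, 0 < t → t * c ≤ u) : c ≤ 0 := by
  by_contra! hc
  have := h ((|u| + 1) / c) (by positivity)
  rw [div_mul_cancel₀ _ hc.ne'] at this
  linarith [le_abs_self u]

theorem exists_nonneg_forall_sum_mul_nonpos {ι : Type*} [Fintype ι] {W : Set (ι → ℝ)}
    (hW : Convex ℝ W) (hne : W.Nonempty) (hdisj : ∀ w ∈ W, ∃ i, w i ≤ 0) :
    ∃ ℓ : ι → ℝ, (∀ i, 0 ≤ ℓ i) ∧ 0 < ∑ i, ℓ i ∧ ∀ w ∈ W, ∑ i, ℓ i * w i ≤ 0 := by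
  classical
  set O : Set (ι → ℝ) := univ.pi fun _ => Ioi 0
  have hOW : Disjoint O W := Set.disjoint_left.2 fun w hwO hw => by
    obtain ⟨i, hi⟩ := hdisj w hw
    exact hi.not_gt (hwO i (mem_univ i))
  obtain ⟨f, u, hfO, hfW⟩ := geometric_hahn_banach_open (convex_pi fun _ _ => convex_Ioi 0)
    (isOpen_set_pi finite_univ fun _ _ => isOpen_Ioi) hW hOW
  have hf_le : ∀ v : ι → ℝ, 0 ≤ v → f v ≤ u := by
    have : closure O ⊆ f ⁻¹' Iic u :=
      (isClosed_Iic.preimage f.continuous).closure_subset_iff.2 fun v hv => (hfO v hv).le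
    intro v hv
    refine this ?_
    rw [closure_pi_set]
    intro i _
    rw [closure_Ioi]
    exact hv i
  have hu : 0 ≤ u := by simpa using hf_le 0 le_rfl
  set ℓ : ι → ℝ := fun i => -f (Pi.single i 1)
  have hℓ : ∀ i, 0 ≤ ℓ i := fun i => neg_nonneg.2 <| nonpos_of_forall_mul_le fun t ht => by
    simpa using hf_le (t • Pi.single i 1) (smul_nonneg ht.le (Pi.single_nonneg.2 zero_le_one))
  have hf : ∀ v, f v = -∑ i, ℓ i * v i := fun v => by
    conv_lhs => rw [pi_eq_sum_univ' v]
    simp [ℓ, mul_comm]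
  refine ⟨ℓ, hℓ, (sum_nonneg fun i _ => hℓ i).lt_of_ne fun hS => ?_, fun w hw => ?_⟩
  · have hℓ0 := (sum_eq_zero_iff_of_nonneg fun i _ => hℓ i).1 hS.symm
    obtain ⟨w, hw⟩ := hne
    have h1 := hfO 1 fun i _ => zero_lt_one' ℝ
    have h2 := hfW w hw
    simp only [hf, hℓ0 _ (mem_univ _), zero_mul, sum_const_zero, neg_zero] at h1 h2
    linarith
  · linarith [hf w, hfW w hw]

theorem exists_sum_eq_one_forall_sum_mul_nonpos {ι : Type*} [Fintype ι] {W : Set (ι → ℝ)}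
    (hW : Convex ℝ W) (hne : W.Nonempty) (hdisj : ∀ w ∈ W, ∃ i, w i ≤ 0) :
    ∃ a : ι → ℝ≥0, ∑ i, a i = 1 ∧ ∀ w ∈ W, ∑ i, (a i : ℝ) * w i ≤ 0 := by
  obtain ⟨ℓ, hℓ, hS, hℓW⟩ := exists_nonneg_forall_sum_mul_nonpos hW hne hdisj
  have ha : ∀ i, ((ℓ i / ∑ j, ℓ j).toNNReal : ℝ) = ℓ i / ∑ j, ℓ j := fun i =>
    Real.coe_toNNReal _ (div_nonneg (hℓ i) hS.le)
  refine ⟨fun i => (ℓ i / ∑ j, ℓ j).toNNReal, NNReal.coe_injective ?_, fun w hw => ?_⟩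
  · simp only [NNReal.coe_sum, ha, ← sum_div, NNReal.coe_one]
    exact div_self hS.ne'
  · simp only [ha, div_mul_eq_mul_div, ← sum_div]
    exact div_nonpos_of_nonpos_of_nonneg (hℓW w hw) hS.le

theorem ENNReal.sum_mul_le_of_forall_nnreal_le {ι : Type*} [Fintype ι] (a : ι → ℝ≥0)
    {v : ι → ℝ≥0∞} {c : ℝ≥0∞}
    (h : ∀ r : ι → ℝ≥0, (∀ i, (r i : ℝ≥0∞) ≤ v i) → ∑ i, (a i * r i : ℝ≥0∞) ≤ c) :
    ∑ i, (a i : ℝ≥0∞) * v i ≤ c := by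
  have hmono : ∀ i, Monotone fun M : ℕ => (a i : ℝ≥0∞) * (v i ⊓ M) := fun i _ _ hMN => by
    dsimp only
    gcongr
  calc ∑ i, (a i : ℝ≥0∞) * v i = ⨆ M : ℕ, ∑ i, (a i : ℝ≥0∞) * (v i ⊓ M) := by
        rw [← ENNReal.finsetSum_iSup_of_monotone hmono]
        simp_rw [← ENNReal.mul_iSup, ← inf_iSup_eq, ENNReal.iSup_natCast, inf_top_eq]
    _ ≤ c := iSup_le fun M => by
        have hfin : ∀ i, v i ⊓ M ≠ ∞ := fun i =>
          ne_top_of_le_ne_top (ENNReal.natCast_ne_top M) inf_le_right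
        simpa [ENNReal.coe_toNNReal (hfin _)] using
          h (fun i => (v i ⊓ M).toNNReal) fun i => by simp [ENNReal.coe_toNNReal (hfin i)]

theorem iInf_le_sum_mul {ι : Type*} [Fintype ι] {a : ι → ℝ≥0} (ha : ∑ i, a i = 1)
    (v : ι → ℝ≥0∞) : ⨅ i, v i ≤ ∑ i, (a i : ℝ≥0∞) * v i := calc
  ⨅ i, v i = ∑ i, (a i : ℝ≥0∞) * ⨅ j, v j := by
    rw [← Finset.sum_mul, ← ENNReal.ofNNReal_finsetSum, ha, ENNReal.coe_one, one_mul]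
  _ ≤ ∑ i, (a i : ℝ≥0∞) * v i := by gcongr with i; exact iInf_le v i

section ExcessSet

variable {D ι : Type*} {φ : D → ℝ≥0∞} {ψ : ι → D → ℝ≥0∞}

def excessSet (φ : D → ℝ≥0∞) (ψ : ι → D → ℝ≥0∞) : Set (ι → ℝ) :=
  {w | ∃ (x : D) (q : ℝ≥0) (r : ι → ℝ≥0),
    φ x ≤ q ∧ (∀ i, (r i : ℝ≥0∞) ≤ ψ i x) ∧ w = fun i => (r i : ℝ) - q}

theorem exists_nonpos_of_mem_excessSet [Finite ι] (hle : ∀ x : D, ⨅ i, ψ i x ≤ φ x)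
    {w : ι → ℝ} (hw : w ∈ excessSet φ ψ) : ∃ i, w i ≤ 0 := by
  obtain ⟨x, q, r, hx, hr, rfl⟩ := hw
  cases isEmpty_or_nonempty ι
  · have := (hle x).trans hx
    rw [iInf_of_empty] at this
    simp at this
  obtain ⟨i, hi⟩ := Finite.exists_min fun i => ψ i x
  have : (r i : ℝ≥0∞) ≤ q := (hr i).trans <| (le_iInf hi).trans <| (hle x).trans hx
  exact ⟨i, sub_nonpos.2 (mod_cast this)⟩

theorem sum_mul_le_of_forall_mem_excessSet [Fintype ι] {a : ι → ℝ≥0} (ha : ∑ i, a i = 1)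
    (hW : ∀ w ∈ excessSet φ ψ, ∑ i, (a i : ℝ) * w i ≤ 0) (x : D) :
    ∑ i, (a i : ℝ≥0∞) * ψ i x ≤ φ x := by
  rcases eq_or_ne (φ x) ∞ with hx | hx
  · simp [hx]
  rw [← ENNReal.coe_toNNReal hx]
  refine ENNReal.sum_mul_le_of_forall_nnreal_le a fun r hr => ?_
  have := hW _ ⟨x, (φ x).toNNReal, r, (ENNReal.coe_toNNReal hx).ge, hr, rfl⟩
  simp only [mul_sub, sum_sub_distrib, ← sum_mul, ← NNReal.coe_sum, ha, NNReal.coe_one, one_mul,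
    sub_nonpos] at this
  exact_mod_cast this

theorem zero_mem_excessSet [AddCommMonoid D] [Module ℝ≥0 D]
    (hφ_hom : ∀ (r : ℝ≥0) (a : D), φ (r • a) = r * φ a) :
    (0 : ι → ℝ) ∈ excessSet φ ψ :=
  ⟨0, 0, 0, by simpa using hφ_hom 0 0, fun _ => by simp, by ext; simp⟩

theorem convex_excessSet [AddCommMonoid D] [Module ℝ≥0 D]
    (hφ_hom : ∀ (r : ℝ≥0) (a : D), φ (r • a) = r * φ a)
    (hφ_subadd : ∀ a b : D, φ (a + b) ≤ φ a + φ b)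
    (hψ_hom : ∀ i, ∀ (r : ℝ≥0) (a : D), ψ i (r • a) = r * ψ i a)
    (hψ_add : ∀ i, ∀ a b : D, ψ i (a + b) = ψ i a + ψ i b) :
    Convex ℝ (excessSet φ ψ) := by
  rintro _ ⟨x, q, r, hx, hr, rfl⟩ _ ⟨y, q', r', hy, hr', rfl⟩ t s ht hs -
  lift t to ℝ≥0 using ht
  lift s to ℝ≥0 using hs
  refine ⟨t • x + s • y, t * q + s * q', t • r + s • r', ?_, fun i => ?_, ?_⟩
  · calc φ (t • x + s • y) ≤ t * φ x + s * φ y := by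
          rw [← hφ_hom, ← hφ_hom]
          exact hφ_subadd _ _
      _ ≤ ↑(t * q + s * q') := by
          push_cast
          gcongr
  · rw [hψ_add, hψ_hom, hψ_hom]
    simp only [Pi.add_apply, Pi.smul_apply, smul_eq_mul]
    push_cast
    gcongr
    exacts [hr i, hr' i]
  · ext i
    simp only [Pi.add_apply, Pi.smul_apply, smul_eq_mul]
    push_cast
    ring

end ExcessSet

theorem interpolation_convex_combination_general {D : Type*} [AddCommMonoid D] [Module ℝ≥0 D]
    (n : ℕ) (φ : D → ℝ≥0∞)
    (hφ_hom : ∀ (r : ℝ≥0) (a : D), φ (r • a) = (r : ℝ≥0∞) * φ a)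
    (hφ_subadd : ∀ a b : D, φ (a + b) ≤ φ a + φ b)
    (ψ : Fin n → D → ℝ≥0∞)
    (hψ_hom : ∀ i, ∀ (r : ℝ≥0) (a : D), ψ i (r • a) = (r : ℝ≥0∞) * ψ i a)
    (hψ_add : ∀ i, ∀ a b : D, ψ i (a + b) = ψ i a + ψ i b)
    (hle : ∀ x : D, (⨅ i, ψ i x) ≤ φ x) :
    ∃ a : Fin n → ℝ≥0, ∑ i, a i = 1 ∧
      ∀ x : D, (⨅ i, ψ i x) ≤ ∑ i, (a i : ℝ≥0∞) * ψ i x ∧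
        ∑ i, (a i : ℝ≥0∞) * ψ i x ≤ φ x := by
  obtain ⟨a, ha, haW⟩ := exists_sum_eq_one_forall_sum_mul_nonpos
    (convex_excessSet hφ_hom hφ_subadd hψ_hom hψ_add) ⟨0, zero_mem_excessSet hφ_hom⟩
    fun _ => exists_nonpos_of_mem_excessSet hle
  exact ⟨a, ha, fun x => ⟨iInf_le_sum_mul ha _, sum_mul_le_of_forall_mem_excessSet ha haW x⟩⟩

/-- Interpolation by convex combinations (Proposition `key`): given a sublinear
functional `φ` on a cone `D` dominating the pointwise infimum of finitely many
linear functionals `ψ i`, some convex combination of the `ψ i` interpolates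
between the infimum and `φ`. -/
theorem interpolation_convex_combination {D : Type*} [AddCommMonoid D] [Module ℝ≥0 D]
    (n : ℕ) (hn : 1 ≤ n) (φ : D → ℝ≥0∞)
    (hφ_hom : ∀ (r : ℝ≥0) (a : D), φ (r • a) = (r : ℝ≥0∞) * φ a)
    (hφ_subadd : ∀ a b : D, φ (a + b) ≤ φ a + φ b)
    (ψ : Fin n → D → ℝ≥0∞)
    (hψ_hom : ∀ i, ∀ (r : ℝ≥0) (a : D), ψ i (r • a) = (r : ℝ≥0∞) * ψ i a)
    (hψ_add : ∀ i, ∀ a b : D, ψ i (a + b) = ψ i a + ψ i b)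
    (hle : ∀ x : D, (⨅ i, ψ i x) ≤ φ x) :
    ∃ a : Fin n → ℝ≥0, ∑ i, a i = 1 ∧
      ∀ x : D, (⨅ i, ψ i x) ≤ ∑ i, (a i : ℝ≥0∞) * ψ i x ∧
        ∑ i, (a i : ℝ≥0∞) * ψ i x ≤ φ x :=
  interpolation_convex_combination_general n φ hφ_hom hφ_subadd ψ hψ_hom hψ_add hle
end

section
/- Let D be a cone carrying a compatible topology and let φ : D → ℝ≥0∞ be a homogeneous functional that is lower semicontinuous (i.e. {x | r < φ(x)} is open for every r : ℝ≥0). Then φ is superlinear (φ(a + b) ≥ φ(a) + φ(b) for all a, b) if and only if the set U_φ = {x ∈ D | 1 < φ(x)} is convex. -/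
/-!
Superlinear implies convex: a convex combination of two points with `φ > 1` has
`φ ≥ min (φ a) (φ b) > 1`. Conversely, for `s < φ a` and `t < φ b` the points `s⁻¹ • a` and
`t⁻¹ • b` lie in `U_φ`, and their convex combination with weights `s / (s + t)`, `t / (s + t)`
is `(s + t)⁻¹ • (a + b)`, so `s + t < φ (a + b)`. The degenerate cases `s = 0` or `t = 0` need
`φ b ≤ φ (a + b)`: in the upper topology every `r` specializes to `0`, so `b + a ⤳ b` along
the continuous ray `r ↦ b + r • a`, and lower semicontinuous functionals are antitone
along specialization.
-/

open scoped ENNReal NNReal Topology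

/-- The upper topology on `ℝ≥0`: the nontrivial open sets are the
intervals `{s | a < s}`. -/
def nnrealUpperTopology : TopologicalSpace ℝ≥0 :=
  TopologicalSpace.generateFrom {S | ∃ a : ℝ≥0, S = Set.Ioi a}

theorem nnrealUpperTopology_eq_upper : nnrealUpperTopology = Topology.upper ℝ≥0 := by
  simp only [nnrealUpperTopology, Topology.upper, Set.compl_Iic, eq_comm]

theorem nnrealUpperTopology_specializes_zero (r : ℝ≥0) :
    @Specializes ℝ≥0 nnrealUpperTopology r 0 := by
  let := nnrealUpperTopology
  have : Topology.IsUpper ℝ≥0 := ⟨nnrealUpperTopology_eq_upper⟩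
  exact specializes_iff_forall_open.2 fun _ hV h0 ↦
    Topology.IsUpper.isUpperSet_of_isOpen hV zero_le h0

theorem ENNReal.add_le_of_forall_lt {a b c : ℝ≥0∞} (ha : a ≤ c) (hb : b ≤ c)
    (h : ∀ a' < a, ∀ b' < b, a' + b' ≤ c) : a + b ≤ c := by
  rcases eq_or_ne a 0 with rfl | ha0
  · simpa using hb
  rcases eq_or_ne b 0 with rfl | hb0
  · simpa using ha
  refine le_of_forall_lt_imp_le_of_dense fun d hd ↦ ?_
  obtain ⟨a', ha', b', hb', hd⟩ := ENNReal.exists_lt_add_of_lt_add hd ha0 hb0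
  exact hd.le.trans (h a' ha' b' hb')

theorem convex_nnreal_iff {E : Type*} [AddCommMonoid E] [SMul ℝ≥0 E] {s : Set E} :
    Convex ℝ≥0 s ↔ ∀ a ∈ s, ∀ b ∈ s, ∀ r : ℝ≥0, r ≤ 1 → r • a + (1 - r) • b ∈ s := by
  refine ⟨fun h a ha b hb r hr ↦ h ha hb zero_le zero_le (add_tsub_cancel_of_le hr),
    fun h a ha b hb r t _ _ hrt ↦ ?_⟩
  obtain rfl : t = 1 - r := by rw [← hrt, add_tsub_cancel_left]
  exact h a ha b hb r (hrt ▸ le_self_add)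

theorem apply_le_of_specializes {X : Type*} [TopologicalSpace X] {φ : X → ℝ≥0∞}
    (hφ_lsc : ∀ r : ℝ≥0, IsOpen {x : X | (r : ℝ≥0∞) < φ x}) {x y : X} (h : x ⤳ y) :
    φ y ≤ φ x :=
  ENNReal.le_of_forall_nnreal_lt fun t ht ↦ (specializes_iff_forall_open.1 h _ (hφ_lsc t) ht).le

section Cone

variable {D : Type*} [AddCommMonoid D] [Module ℝ≥0 D] {φ : D → ℝ≥0∞}

theorem apply_le_apply_add [TopologicalSpace D]
    (htrans : ∀ a : D, Continuous fun y : D => a + y)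
    (hray : ∀ y : D, Continuous[nnrealUpperTopology, _] fun r : ℝ≥0 => r • y)
    (hφ_lsc : ∀ r : ℝ≥0, IsOpen {x : D | (r : ℝ≥0∞) < φ x}) (a b : D) :
    φ b ≤ φ (a + b) := by
  let := nnrealUpperTopology
  have hspec : (b + (1 : ℝ≥0) • a) ⤳ (b + (0 : ℝ≥0) • a) :=
    (nnrealUpperTopology_specializes_zero 1).map ((htrans b).comp (hray a))
  rw [one_smul, zero_smul, add_zero, add_comm] at hspec
  exact apply_le_of_specializes hφ_lsc hspec

variable (hφ_hom : ∀ (r : ℝ≥0) (a : D), φ (r • a) = (r : ℝ≥0∞) * φ a)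
include hφ_hom

theorem one_lt_apply_inv_smul_iff {c : ℝ≥0} (hc : c ≠ 0) (x : D) :
    1 < φ (c⁻¹ • x) ↔ (c : ℝ≥0∞) < φ x := by
  rw [hφ_hom, ENNReal.coe_inv hc, mul_comm, ← div_eq_mul_inv,
    ENNReal.lt_div_iff_mul_lt (.inl (ENNReal.coe_ne_zero.2 hc)) (.inl ENNReal.coe_ne_top),
    one_mul]

theorem convex_setOf_one_lt_of_superadditive (hφ_add : ∀ a b : D, φ a + φ b ≤ φ (a + b)) :
    Convex ℝ≥0 {x : D | 1 < φ x} := by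
  intro a ha b hb s t _ _ hst
  have hst' : (s : ℝ≥0∞) + t = 1 := by exact_mod_cast hst
  calc 1 < min (φ a) (φ b) := lt_min ha hb
    _ = s * min (φ a) (φ b) + t * min (φ a) (φ b) := by rw [← add_mul, hst', one_mul]
    _ ≤ s * φ a + t * φ b := by gcongr; exacts [min_le_left _ _, min_le_right _ _]
    _ = φ (s • a) + φ (t • b) := by rw [hφ_hom, hφ_hom]
    _ ≤ φ (s • a + t • b) := hφ_add _ _

theorem coe_add_lt_apply_add_of_convex (hconv : Convex ℝ≥0 {x : D | 1 < φ x}) {a b : D}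
    {s t : ℝ≥0} (hs0 : s ≠ 0) (ht0 : t ≠ 0) (hs : (s : ℝ≥0∞) < φ a) (ht : (t : ℝ≥0∞) < φ b) :
    ((s + t : ℝ≥0) : ℝ≥0∞) < φ (a + b) := by
  have hst : s + t ≠ 0 := by positivity
  have hcomb : (s / (s + t)) • s⁻¹ • a + (t / (s + t)) • t⁻¹ • b = (s + t)⁻¹ • (a + b) := by
    rw [smul_smul, smul_smul, smul_add, div_eq_mul_inv, div_eq_mul_inv,
      mul_right_comm s, mul_right_comm t, mul_inv_cancel₀ hs0, mul_inv_cancel₀ ht0, one_mul]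
  have hmem := hconv ((one_lt_apply_inv_smul_iff hφ_hom hs0 a).2 hs)
    ((one_lt_apply_inv_smul_iff hφ_hom ht0 b).2 ht) zero_le zero_le
    (by rw [← add_div, div_self hst])
  rw [Set.mem_ofPred_eq, hcomb] at hmem
  exact (one_lt_apply_inv_smul_iff hφ_hom hst _).1 hmem

theorem superadditive_of_convex_setOf_one_lt (hmono : ∀ a b : D, φ b ≤ φ (a + b))
    (hconv : Convex ℝ≥0 {x : D | 1 < φ x}) (a b : D) : φ a + φ b ≤ φ (a + b) := by
  refine ENNReal.add_le_of_forall_lt (add_comm b a ▸ hmono b a) (hmono a b) fun s hs t ht ↦ ?_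
  lift s to ℝ≥0 using hs.ne_top
  lift t to ℝ≥0 using ht.ne_top
  rcases eq_or_ne s 0 with rfl | hs0
  · simpa using ht.le.trans (hmono a b)
  rcases eq_or_ne t 0 with rfl | ht0
  · simpa using hs.le.trans (add_comm b a ▸ hmono b a)
  exact_mod_cast (coe_add_lt_apply_add_of_convex hφ_hom hconv hs0 ht0 hs ht).le

end Cone

theorem superlinear_iff_U_convex_general {D : Type*} [AddCommMonoid D] [Module ℝ≥0 D]
    [TopologicalSpace D]
    (htrans : ∀ a : D, Continuous fun y : D => a + y)
    (hray : ∀ y : D, Continuous[nnrealUpperTopology, _] fun r : ℝ≥0 => r • y)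
    (φ : D → ℝ≥0∞)
    (hφ_hom : ∀ (r : ℝ≥0) (a : D), φ (r • a) = (r : ℝ≥0∞) * φ a)
    (hφ_lsc : ∀ r : ℝ≥0, IsOpen {x : D | (r : ℝ≥0∞) < φ x}) :
    (∀ a b : D, φ a + φ b ≤ φ (a + b)) ↔
      (∀ a ∈ {x : D | 1 < φ x}, ∀ b ∈ {x : D | 1 < φ x}, ∀ r : ℝ≥0, r ≤ 1 →
        r • a + (1 - r) • b ∈ {x : D | 1 < φ x}) := by
  rw [← convex_nnreal_iff]
  exact ⟨convex_setOf_one_lt_of_superadditive hφ_hom,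
    superadditive_of_convex_setOf_one_lt hφ_hom (apply_le_apply_add htrans hray hφ_lsc)⟩

/-- On a cone `D` with a compatible topology, a homogeneous lower semicontinuous
functional `φ` is superlinear iff `U_φ = {x | 1 < φ x}` is convex. -/
theorem superlinear_iff_U_convex {D : Type*} [AddCommMonoid D] [Module ℝ≥0 D]
    [TopologicalSpace D]
    (htrans : ∀ a : D, Continuous fun y : D => a + y)
    (hhomothety : ∀ r : ℝ≥0, Continuous fun y : D => r • y)
    (hray : ∀ y : D, Continuous[nnrealUpperTopology, _] fun r : ℝ≥0 => r • y)
    (φ : D → ℝ≥0∞)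
    (hφ_hom : ∀ (r : ℝ≥0) (a : D), φ (r • a) = (r : ℝ≥0∞) * φ a)
    (hφ_lsc : ∀ r : ℝ≥0, IsOpen {x : D | (r : ℝ≥0∞) < φ x}) :
    (∀ a b : D, φ a + φ b ≤ φ (a + b)) ↔
      (∀ a ∈ {x : D | 1 < φ x}, ∀ b ∈ {x : D | 1 < φ x}, ∀ r : ℝ≥0, r ≤ 1 →
        r • a + (1 - r) • b ∈ {x : D | 1 < φ x}) :=
  superlinear_iff_U_convex_general htrans hray φ hφ_hom hφ_lsc
end

section
/- Let D be a cone carrying a topology and let φ : D → ℝ≥0∞ be a homogeneous lower semicontinuous functional. Then U_φ = {y ∈ D | 1 < φ(y)} is an open set not containing 0, and the upper Minkowski functional of U_φ recovers φ: for every y ∈ D, ⨆ (r : ℝ≥0) (_ : 0 < r ∧ y ∈ r • U_φ), (r : ℝ≥0∞) = φ(y). -/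
open scoped ENNReal NNReal Pointwise

lemma ENNReal.iSup_coe_pos_lt (x : ℝ≥0∞) :
    ⨆ (r : ℝ≥0) (_ : 0 < r ∧ (r : ℝ≥0∞) < x), (r : ℝ≥0∞) = x :=
  le_antisymm (iSup₂_le fun _ hr => hr.2.le)
    (ENNReal.le_of_forall_pos_nnreal_lt fun r hr hrx => le_iSup₂_of_le r ⟨hr, hrx⟩ le_rfl)

section Homogeneous

variable {D : Type*} [AddCommMonoid D] [Module ℝ≥0 D] {φ : D → ℝ≥0∞}

lemma map_zero_of_homogeneous (hφ : ∀ (r : ℝ≥0) (a : D), φ (r • a) = r * φ a) : φ 0 = 0 := by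
  simpa using hφ 0 0

lemma mem_smul_setOf_one_lt_iff (hφ : ∀ (r : ℝ≥0) (a : D), φ (r • a) = r * φ a)
    {r : ℝ≥0} (hr : r ≠ 0) (y : D) :
    y ∈ r • {y : D | 1 < φ y} ↔ (r : ℝ≥0∞) < φ y := by
  have hr' : (r : ℝ≥0∞) ≠ 0 := ENNReal.coe_ne_zero.2 hr
  rw [Set.mem_smul_set_iff_inv_smul_mem₀ hr, Set.mem_ofPred_eq, hφ, ENNReal.coe_inv hr,
    ← ENNReal.div_eq_inv_mul, ENNReal.lt_div_iff_mul_lt (Or.inl hr') (Or.inl ENNReal.coe_ne_top),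
    one_mul]

end Homogeneous

/-- For a homogeneous lower semicontinuous functional `φ` on a cone `D` with a
topology, the set `U_φ = {y | 1 < φ y}` is open, does not contain `0`, and the
upper Minkowski functional of `U_φ` recovers `φ`. -/
theorem minkowski_recovers_functional {D : Type*} [AddCommMonoid D] [Module ℝ≥0 D]
    [TopologicalSpace D]
    (φ : D → ℝ≥0∞)
    (hφ_hom : ∀ (r : ℝ≥0) (a : D), φ (r • a) = (r : ℝ≥0∞) * φ a)
    (hφ_lsc : ∀ r : ℝ≥0, IsOpen {x : D | (r : ℝ≥0∞) < φ x}) :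
    IsOpen {y : D | 1 < φ y} ∧ (0 : D) ∉ {y : D | 1 < φ y} ∧
    ∀ y : D, (⨆ (r : ℝ≥0) (_ : 0 < r ∧ y ∈ r • {y : D | 1 < φ y}), (r : ℝ≥0∞)) = φ y := by
  refine ⟨hφ_lsc 1, by simp [map_zero_of_homogeneous hφ_hom], fun y => ?_⟩
  calc ⨆ (r : ℝ≥0) (_ : 0 < r ∧ y ∈ r • {y : D | 1 < φ y}), (r : ℝ≥0∞)
      = ⨆ (r : ℝ≥0) (_ : 0 < r ∧ (r : ℝ≥0∞) < φ y), (r : ℝ≥0∞) :=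
        iSup_congr fun r => iSup_congr_Prop
          (and_congr_right fun hr => mem_smul_setOf_one_lt_iff hφ_hom hr.ne' y) fun _ => rfl
    _ = φ y := ENNReal.iSup_coe_pos_lt (φ y)
end

section
/- Let C, D be cones and B : C → D → ℝ≥0∞ a bilinear map, and endow D with the weak upper topology w(D,C). Then every homogeneous functional ψ : D → ℝ≥0∞ that is lower semicontinuous for w(D,C) is the pointwise supremum of the finite pointwise infima of evaluation functionals lying below it: for every y ∈ D, ψ(y) = ⨆ (F : Finset C) (_ : F.Nonempty ∧ ∀ z ∈ D, (⨅ x ∈ F, B x z) ≤ ψ(z)), ⨅ x ∈ F, B x y. -/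
/-!
If `r < ψ y`, lower semicontinuity gives finitely many pairs `(xᵢ, sᵢ)` with `sᵢ < B xᵢ y` such
that `sᵢ < B xᵢ z` for all `i` forces `r < ψ z`. Choosing `sᵢ < tᵢ < B xᵢ y` (so `tᵢ ≠ 0`), the family
`F = {(r / tᵢ) • xᵢ}` has `r ≤ ⨅ x ∈ F, B x y`, and `r < ⨅ x ∈ F, B x z` forces `r < ψ z`.
For homogeneous functionals, inclusion of a single positive superlevel set already gives `≤`.
-/

open scoped ENNReal NNReal Topology

open Set TopologicalSpace

theorem exists_finset_mem_biInter_subset_of_isOpen_generateFrom_range {ι α : Type*}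
    (g : ι → Set α) {U : Set α} (hU : IsOpen[generateFrom (range g)] U) {a : α} (ha : a ∈ U) :
    ∃ I : Finset ι, a ∈ ⋂ i ∈ I, g i ∧ ⋂ i ∈ I, g i ⊆ U := by
  classical
  induction hU with
  | basic S hS =>
    obtain ⟨i, rfl⟩ := hS
    exact ⟨{i}, by simpa using ha, by simp⟩
  | univ => exact ⟨∅, by simp, by simp⟩
  | inter U V _ _ ihU ihV =>
    obtain ⟨I, haI, hIU⟩ := ihU ha.1
    obtain ⟨J, haJ, hJV⟩ := ihV ha.2
    have hIJ : ⋂ i ∈ I ∪ J, g i = (⋂ i ∈ I, g i) ∩ ⋂ i ∈ J, g i := by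
      simp only [← Finset.set_biInter_coe, Finset.coe_union, biInter_union]
    exact ⟨I ∪ J, hIJ ▸ ⟨haI, haJ⟩, hIJ ▸ inter_subset_inter hIU hJV⟩
  | sUnion 𝒮 _ ih =>
    obtain ⟨S, hS, haS⟩ := ha
    obtain ⟨I, haI, hIS⟩ := ih S hS haS
    exact ⟨I, haI, hIS.trans (subset_sUnion_of_mem hS)⟩

theorem exists_finset_of_isOpen_weakUpper {C D : Type*} (B : C → D → ℝ≥0∞) {U : Set D}
    (hU : IsOpen[generateFrom {S | ∃ (x : C) (s : ℝ≥0), S = {y : D | (s : ℝ≥0∞) < B x y}}] U)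
    {y : D} (hy : y ∈ U) :
    ∃ I : Finset (C × ℝ≥0), (∀ p ∈ I, (p.2 : ℝ≥0∞) < B p.1 y) ∧
      ∀ z, (∀ p ∈ I, (p.2 : ℝ≥0∞) < B p.1 z) → z ∈ U := by
  have hgen : {S | ∃ (x : C) (s : ℝ≥0), S = {y : D | (s : ℝ≥0∞) < B x y}} =
      range fun p : C × ℝ≥0 => {z | (p.2 : ℝ≥0∞) < B p.1 z} := by
    ext S
    simp [eq_comm]
  rw [hgen] at hU
  obtain ⟨I, hyI, hIU⟩ := exists_finset_mem_biInter_subset_of_isOpen_generateFrom_range _ hU hy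
  exact ⟨I, by simpa using hyI, fun z hz => hIU (by simpa using hz)⟩

theorem le_of_setOf_coe_lt_subset {D : Type*} [SMul ℝ≥0 D] {φ ψ : D → ℝ≥0∞}
    (hφ : ∀ (c : ℝ≥0) (z : D), (c : ℝ≥0∞) * φ z ≤ φ (c • z))
    (hψ : ∀ (c : ℝ≥0) (z : D), ψ (c • z) ≤ (c : ℝ≥0∞) * ψ z)
    {r : ℝ≥0} (hr : r ≠ 0) (h : {z | (r : ℝ≥0∞) < φ z} ⊆ {z | (r : ℝ≥0∞) < ψ z}) :
    φ ≤ ψ := by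
  intro z
  by_contra! hlt
  obtain ⟨q, hψq, hqφ⟩ := ENNReal.lt_iff_exists_nnreal_btwn.1 hlt
  have hq : q ≠ 0 := by
    rintro rfl
    simp at hψq
  have hrq : ((r / q : ℝ≥0) : ℝ≥0∞) * q = r := by
    rw [← ENNReal.coe_mul, div_mul_cancel₀ _ hq]
  have hc : ((r / q : ℝ≥0) : ℝ≥0∞) ≠ 0 := by simp [hr, hq]
  have hcz := h <| show (r : ℝ≥0∞) < φ ((r / q) • z) from calc
    (r : ℝ≥0∞) = (r / q : ℝ≥0) * q := hrq.symm
    _ < (r / q : ℝ≥0) * φ z := (ENNReal.mul_lt_mul_iff_right hc ENNReal.coe_ne_top).2 hqφ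
    _ ≤ φ ((r / q) • z) := hφ _ _
  exact (hcz.trans_le ((hψ _ _).trans (by grw [hψq.le, hrq]))).false

theorem exists_finset_iInf_le_and_coe_le_iInf {C D : Type*} [SMul ℝ≥0 C] [SMul ℝ≥0 D]
    {B : C → D → ℝ≥0∞}
    (hB_smull : ∀ (r : ℝ≥0) (x : C) (y : D), B (r • x) y = (r : ℝ≥0∞) * B x y)
    (hB_smulr : ∀ (r : ℝ≥0) (x : C) (y : D), B x (r • y) = (r : ℝ≥0∞) * B x y)
    {ψ : D → ℝ≥0∞} (hψ : ∀ (c : ℝ≥0) (z : D), ψ (c • z) ≤ (c : ℝ≥0∞) * ψ z)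
    {r : ℝ≥0} (hr : r ≠ 0) {I : Finset (C × ℝ≥0)}
    (hIψ : ∀ z, (∀ p ∈ I, (p.2 : ℝ≥0∞) < B p.1 z) → (r : ℝ≥0∞) < ψ z)
    {y : D} (hyI : ∀ p ∈ I, (p.2 : ℝ≥0∞) < B p.1 y) :
    ∃ F : Finset C, F.Nonempty ∧ (∀ z, ⨅ x ∈ F, B x z ≤ ψ z) ∧ (r : ℝ≥0∞) ≤ ⨅ x ∈ F, B x y := by
  classical
  choose! t hst htB using fun p hp => ENNReal.lt_iff_exists_nnreal_btwn.1 (hyI p hp)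
  have hI : I.Nonempty := by
    refine Finset.nonempty_iff_ne_empty.2 fun hI => ?_
    have h0 := (hIψ ((0 : ℝ≥0) • y) (by simp [hI])).trans_le (hψ 0 y)
    simp at h0
  have hrt : ∀ p ∈ I, ((r / t p : ℝ≥0) : ℝ≥0∞) * t p = r := fun p hp => by
    rw [← ENNReal.coe_mul, div_mul_cancel₀ _ (ENNReal.coe_pos.1 (pos_of_gt (hst p hp))).ne']
  set F := I.image fun p => (r / t p) • p.1
  have hFψ : (fun z => ⨅ x ∈ F, B x z) ≤ ψ := by
    refine le_of_setOf_coe_lt_subset (fun c z => ?_) hψ hr fun z hz => ?_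
    · refine le_iInf₂ fun x hx => ?_
      rw [hB_smulr]
      gcongr
      exact iInf₂_le x hx
    · refine hIψ z fun p hp => (hst p hp).trans ?_
      have hrB : (r : ℝ≥0∞) < (r / t p : ℝ≥0) * B p.1 z :=
        hz.trans_le ((iInf₂_le _ (Finset.mem_image_of_mem _ hp)).trans_eq (hB_smull _ _ _))
      by_contra! hBt
      exact (hrB.trans_le (by grw [hBt, hrt p hp])).false
  refine ⟨F, hI.image _, hFψ, le_iInf₂ fun x hx => ?_⟩
  obtain ⟨p, hp, rfl⟩ := Finset.mem_image.1 hx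
  calc (r : ℝ≥0∞) = (r / t p : ℝ≥0) * t p := (hrt p hp).symm
    _ ≤ (r / t p : ℝ≥0) * B p.1 y := by grw [htB p hp]
    _ = B ((r / t p) • p.1) y := (hB_smull _ _ _).symm

theorem homogeneous_lsc_eq_sup_finite_infs_general
    {C D : Type*} [AddCommMonoid C] [Module ℝ≥0 C] [AddCommMonoid D] [Module ℝ≥0 D]
    (B : C → D → ℝ≥0∞)
    (hB_smull : ∀ (r : ℝ≥0) (x : C) (y : D), B (r • x) y = (r : ℝ≥0∞) * B x y)
    (hB_smulr : ∀ (r : ℝ≥0) (x : C) (y : D), B x (r • y) = (r : ℝ≥0∞) * B x y)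
    (ψ : D → ℝ≥0∞)
    (hψ_hom : ∀ (r : ℝ≥0) (a : D), ψ (r • a) = (r : ℝ≥0∞) * ψ a)
    (hψ_lsc : ∀ r : ℝ≥0,
      IsOpen[TopologicalSpace.generateFrom
        {S | ∃ (x : C) (s : ℝ≥0), S = {y : D | (s : ℝ≥0∞) < B x y}}]
        {y : D | (r : ℝ≥0∞) < ψ y}) :
    ∀ y : D, ψ y =
      ⨆ (F : Finset C) (_ : F.Nonempty ∧ ∀ z : D, (⨅ x ∈ F, B x z) ≤ ψ z),
        ⨅ x ∈ F, B x y := by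
  intro y
  refine le_antisymm ?_ (iSup₂_le fun F hF => hF.2 y)
  refine ENNReal.le_of_forall_nnreal_lt fun r hr => ?_
  rcases eq_or_ne r 0 with rfl | hr0
  · exact zero_le
  obtain ⟨I, hyI, hIψ⟩ := exists_finset_of_isOpen_weakUpper B (hψ_lsc r) hr
  obtain ⟨F, hF, hFψ, hFy⟩ := exists_finset_iInf_le_and_coe_le_iInf hB_smull hB_smulr
    (fun c z => (hψ_hom c z).le) hr0 hIψ hyI
  exact le_iSup₂_of_le F ⟨hF, hFψ⟩ hFy

/-- On `D` with the weak upper topology `w(D,C)` induced by a bilinear map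
`B : C → D → ℝ≥0∞`, every homogeneous lower semicontinuous functional `ψ` is
the pointwise sup of the finite pointwise infima of evaluation functionals
`B x` lying below it. -/
theorem homogeneous_lsc_eq_sup_finite_infs
    {C D : Type*} [AddCommMonoid C] [Module ℝ≥0 C] [AddCommMonoid D] [Module ℝ≥0 D]
    (B : C → D → ℝ≥0∞)
    (hB_addl : ∀ x x' : C, ∀ y : D, B (x + x') y = B x y + B x' y)
    (hB_smull : ∀ (r : ℝ≥0) (x : C) (y : D), B (r • x) y = (r : ℝ≥0∞) * B x y)
    (hB_addr : ∀ (x : C) (y y' : D), B x (y + y') = B x y + B x y')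
    (hB_smulr : ∀ (r : ℝ≥0) (x : C) (y : D), B x (r • y) = (r : ℝ≥0∞) * B x y)
    (ψ : D → ℝ≥0∞)
    (hψ_hom : ∀ (r : ℝ≥0) (a : D), ψ (r • a) = (r : ℝ≥0∞) * ψ a)
    (hψ_lsc : ∀ r : ℝ≥0,
      IsOpen[TopologicalSpace.generateFrom
        {S | ∃ (x : C) (s : ℝ≥0), S = {y : D | (s : ℝ≥0∞) < B x y}}]
        {y : D | (r : ℝ≥0∞) < ψ y}) :
    ∀ y : D, ψ y =
      ⨆ (F : Finset C) (_ : F.Nonempty ∧ ∀ z : D, (⨅ x ∈ F, B x z) ≤ ψ z),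
        ⨅ x ∈ F, B x y :=
  homogeneous_lsc_eq_sup_finite_infs_general B hB_smull hB_smulr ψ hψ_hom hψ_lsc
end

section
/- Let C, D be cones, B : C → D → ℝ≥0∞ a bilinear map, and B₀ ⊆ C an arbitrary subset. Then the topology on D generated by the sets {y ∈ D | (r : ℝ≥0∞) < B x y} for x ∈ B₀ and r : ℝ≥0 coincides with the topology generated by the sets {y ∈ D | (r : ℝ≥0∞) < B x y} for x in the subcone of C generated by B₀ (the ℝ≥0-submodule spanned by B₀) and r : ℝ≥0. -/
open scoped ENNReal NNReal

/-!
The topology generated by the sets `{y | r < B x y}`, `x ∈ B₀`, is the coarsest one for which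
every `B x` with `x ∈ B₀` is lower semicontinuous into `ℝ≥0∞`. Sums and `ℝ≥0`-multiples of
lower semicontinuous `ℝ≥0∞`-valued functions are again lower semicontinuous, and `x ↦ B x` is
linear, so `B x` is lower semicontinuous for every `x` in the span of `B₀`: the generators
coming from the span are already open.
-/

open Set TopologicalSpace

section

variable {X : Type*} [TopologicalSpace X]

theorem lowerSemicontinuous_iff_isOpen_nnreal_lt {f : X → ℝ≥0∞} :
    LowerSemicontinuous f ↔ ∀ r : ℝ≥0, IsOpen {y | (r : ℝ≥0∞) < f y} := by
  refine ⟨fun hf r => hf.isOpen_preimage r, fun h => ?_⟩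
  rw [lowerSemicontinuous_iff_isOpen_preimage]
  intro r
  induction r with
  | top => simp
  | coe r => exact h r

theorem LowerSemicontinuous.const_mul_ennreal {f : X → ℝ≥0∞} (hf : LowerSemicontinuous f)
    (c : ℝ≥0) : LowerSemicontinuous fun y => (c : ℝ≥0∞) * f y :=
  (ENNReal.continuous_const_mul ENNReal.coe_ne_top).comp_lowerSemicontinuous hf
    mul_right_mono

variable (X) in
def lowerSemicontinuousSubmodule : Submodule ℝ≥0 (X → ℝ≥0∞) where
  carrier := {f | LowerSemicontinuous f}
  zero_mem' := lowerSemicontinuous_const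
  add_mem' := LowerSemicontinuous.add
  smul_mem' c _ hf := hf.const_mul_ennreal c

theorem le_generateFrom_nnreal_lt_iff {ι : Type*} (f : ι → X → ℝ≥0∞) (s : Set ι) :
    ‹TopologicalSpace X› ≤
        generateFrom {S | ∃ i ∈ s, ∃ r : ℝ≥0, S = {y | (r : ℝ≥0∞) < f i y}} ↔
      ∀ i ∈ s, LowerSemicontinuous (f i) := by
  simp only [le_generateFrom_iff_subset_isOpen, ofPred_subset, forall_exists_index, and_imp,
    lowerSemicontinuous_iff_isOpen_nnreal_lt]
  exact ⟨fun h i hi r => h _ i hi r rfl, fun h _ i hi r hS => hS ▸ h i hi r⟩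

end

theorem weakUpperTopology_span_general
    {C D : Type*} [AddCommMonoid C] [Module ℝ≥0 C] [AddCommMonoid D]
    (B : C → D → ℝ≥0∞)
    (hB_addl : ∀ x x' : C, ∀ y : D, B (x + x') y = B x y + B x' y)
    (hB_smull : ∀ (r : ℝ≥0) (x : C) (y : D), B (r • x) y = (r : ℝ≥0∞) * B x y)
    (B₀ : Set C) :
    TopologicalSpace.generateFrom
        {S | ∃ x ∈ B₀, ∃ r : ℝ≥0, S = {y : D | (r : ℝ≥0∞) < B x y}}
      = TopologicalSpace.generateFrom
        {S | ∃ x ∈ Submodule.span ℝ≥0 B₀, ∃ r : ℝ≥0, S = {y : D | (r : ℝ≥0∞) < B x y}} := by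
  let : TopologicalSpace D := generateFrom
    {S | ∃ x ∈ B₀, ∃ r : ℝ≥0, S = {y : D | (r : ℝ≥0∞) < B x y}}
  let L : C →ₗ[ℝ≥0] D → ℝ≥0∞ :=
    { toFun := B
      map_add' := fun x x' => funext (hB_addl x x')
      map_smul' := fun r x => funext (hB_smull r x) }
  have hB₀ : B₀ ⊆ (lowerSemicontinuousSubmodule D).comap L :=
    (le_generateFrom_nnreal_lt_iff B B₀).1 le_rfl
  refine le_antisymm ?_ (generateFrom_anti ?_)
  · exact (le_generateFrom_nnreal_lt_iff B _).2 fun x hx => Submodule.span_le.2 hB₀ hx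
  · rintro S ⟨x, hx, r, rfl⟩
    exact ⟨x, Submodule.subset_span hx, r, rfl⟩

/-- The weak upper topology `w(D, B₀)` determined by a subset `B₀ ⊆ C` agrees
with the weak upper topology `w(D, Cone(B₀))` determined by the subcone of `C`
generated by `B₀`. -/
theorem weakUpperTopology_span
    {C D : Type*} [AddCommMonoid C] [Module ℝ≥0 C] [AddCommMonoid D] [Module ℝ≥0 D]
    (B : C → D → ℝ≥0∞)
    (hB_addl : ∀ x x' : C, ∀ y : D, B (x + x') y = B x y + B x' y)
    (hB_smull : ∀ (r : ℝ≥0) (x : C) (y : D), B (r • x) y = (r : ℝ≥0∞) * B x y)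
    (hB_addr : ∀ (x : C) (y y' : D), B x (y + y') = B x y + B x y')
    (hB_smulr : ∀ (r : ℝ≥0) (x : C) (y : D), B x (r • y) = (r : ℝ≥0∞) * B x y)
    (B₀ : Set C) :
    TopologicalSpace.generateFrom
        {S | ∃ x ∈ B₀, ∃ r : ℝ≥0, S = {y : D | (r : ℝ≥0∞) < B x y}}
      = TopologicalSpace.generateFrom
        {S | ∃ x ∈ Submodule.span ℝ≥0 B₀, ∃ r : ℝ≥0, S = {y : D | (r : ℝ≥0∞) < B x y}} :=
  weakUpperTopology_span_general B hB_addl hB_smull B₀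
end

section
/- Every lower semicontinuous linear functional on (ℝ≥0∞)^n is given by coefficients: if G : (Fin n → ℝ≥0∞) → ℝ≥0∞ is additive (G(x + y) = G(x) + G(y)), ℝ≥0-homogeneous (G(r • x) = (r : ℝ≥0∞) * G(x) for all r : ℝ≥0), and lower semicontinuous (with respect to the product topology on Fin n → ℝ≥0∞ coming from the usual topology of ℝ≥0∞), then there exist r : Fin n → ℝ≥0∞ such that G(x) = ∑ i, r i * x i for all x : Fin n → ℝ≥0∞. -/
/-!
Additivity and homogeneity force `G x = ∑ i, G (Pi.single i 1) * x i` on vectors with finite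
entries. Additivity also makes `G` monotone, so for an arbitrary `x` the truncations
`min (x i) k` increase to `x` and lower semicontinuity gives `G x = ⨆ k, G (min x k)`; the
finite formula then passes to the supremum because multiplication by a constant and finite sums
commute with increasing suprema in `ℝ≥0∞`.
-/

open scoped ENNReal NNReal
open Filter Topology

theorem monotone_of_map_add {α β : Type*} [Add α] [Preorder α] [ExistsAddOfLE α]
    [AddZeroClass β] [Preorder β] [CanonicallyOrderedAdd β] {f : α → β}
    (hf : ∀ x y, f (x + y) = f x + f y) : Monotone f := by
  intro a b hab
  obtain ⟨c, rfl⟩ := exists_add_of_le hab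
  rw [hf]
  exact le_self_add

theorem LowerSemicontinuous.le_iSup_of_tendsto {α β ι : Type*} [TopologicalSpace α]
    [CompleteLinearOrder β] {f : α → β} (hf : LowerSemicontinuous f) {l : Filter ι} [l.NeBot]
    {u : ι → α} {x : α} (hu : Tendsto u l (𝓝 x)) : f x ≤ ⨆ k, f (u k) := by
  refine le_of_forall_lt fun c hc => ?_
  obtain ⟨k, hk⟩ := (hu.eventually (hf x c hc)).exists
  exact hk.trans_le (le_iSup (f ∘ u) k)

namespace ENNReal

theorem monotone_min_natCast (a : ℝ≥0∞) : Monotone fun k : ℕ => min a k :=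
  fun _ _ hkl => min_le_min le_rfl (Nat.mono_cast hkl)

theorem iSup_min_natCast (a : ℝ≥0∞) : ⨆ k : ℕ, min a k = a := by
  rw [← inf_iSup_eq, iSup_natCast, inf_top_eq]

theorem tendsto_min_natCast (a : ℝ≥0∞) : Tendsto (fun k : ℕ => min a k) atTop (𝓝 a) := by
  simpa only [iSup_min_natCast] using tendsto_atTop_iSup (monotone_min_natCast a)

end ENNReal

theorem apply_eq_sum_apply_single_mul {ι : Type*} [Fintype ι] [DecidableEq ι]
    {G : (ι → ℝ≥0∞) → ℝ≥0∞} (hadd : ∀ x y, G (x + y) = G x + G y)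
    (hhom : ∀ (r : ℝ≥0) x, G (r • x) = r * G x) {x : ι → ℝ≥0∞} (hx : ∀ i, x i ≠ ∞) :
    G x = ∑ i, G (Pi.single i 1) * x i := by
  lift x to ι → ℝ≥0 using hx
  let Φ : (ι → ℝ≥0∞) →+ ℝ≥0∞ :=
    { toFun := G, map_zero' := by simpa using hhom 0 0, map_add' := hadd }
  have hsingle : ∀ i, (Pi.single i (x i : ℝ≥0∞) : ι → ℝ≥0∞) = x i • Pi.single i 1 := fun i => by
    rw [← Pi.single_smul', ENNReal.smul_def, smul_eq_mul, mul_one]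
  calc G (fun i => x i) = Φ (∑ i, (Pi.single i (x i : ℝ≥0∞) : ι → ℝ≥0∞)) := by
        rw [Finset.univ_sum_single]; rfl
    _ = ∑ i, G (Pi.single i 1) * x i := by
        simp only [map_sum, hsingle]
        exact Finset.sum_congr rfl fun i _ => (hhom _ _).trans (mul_comm _ _)

/-- Every lower semicontinuous linear functional `G` on `(ℝ≥0∞)^n` is given by
coefficients: `G x = ∑ i, r i * x i`. -/
theorem lsc_linear_functional_ennreal_pow (n : ℕ)
    (G : (Fin n → ℝ≥0∞) → ℝ≥0∞)
    (hadd : ∀ x y : Fin n → ℝ≥0∞, G (x + y) = G x + G y)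
    (hhom : ∀ (r : ℝ≥0) (x : Fin n → ℝ≥0∞), G (r • x) = (r : ℝ≥0∞) * G x)
    (hlsc : LowerSemicontinuous G) :
    ∃ r : Fin n → ℝ≥0∞, ∀ x : Fin n → ℝ≥0∞, G x = ∑ i, r i * x i := by
  refine ⟨fun i => G (Pi.single i 1), fun x => ?_⟩
  set u : ℕ → Fin n → ℝ≥0∞ := fun k i => min (x i) k
  have hu : Tendsto u atTop (𝓝 x) :=
    tendsto_pi_nhds.2 fun i => ENNReal.tendsto_min_natCast (x i)
  have hu_le : ∀ k, G (u k) ≤ G x :=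
    fun k => monotone_of_map_add hadd fun i => min_le_left _ _
  have hu_finite : ∀ k i, u k i ≠ ∞ :=
    fun k i => ((min_le_right _ _).trans_lt (ENNReal.natCast_lt_top k)).ne
  calc G x = ⨆ k, G (u k) := le_antisymm (hlsc.le_iSup_of_tendsto hu) (iSup_le hu_le)
    _ = ⨆ k, ∑ i, G (Pi.single i 1) * u k i :=
        iSup_congr fun k => apply_eq_sum_apply_single_mul hadd hhom (hu_finite k)
    _ = ∑ i, ⨆ k, G (Pi.single i 1) * u k i := (ENNReal.finsetSum_iSup_of_monotone
        fun i _ _ hkl => mul_le_mul_right (ENNReal.monotone_min_natCast (x i) hkl) (G (Pi.single i 1))).symm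
    _ = ∑ i, G (Pi.single i 1) * x i := by
        simp only [u, ← ENNReal.mul_iSup, ENNReal.iSup_min_natCast]
end

section
/- Let X be a topological space and let φ : 𝓥X → ℝ≥0∞ be linear (additive and ℝ≥0-homogeneous) and lower semicontinuous with respect to the weak*upper topology. Then φ is the pointwise supremum of the evaluation functionals below it: for every μ ∈ 𝓥X, φ(μ) = ⨆ (f : 𝓛X) (_ : ∀ ν ∈ 𝓥X, ν(f) ≤ φ(ν)), μ(f). In particular there is a family (f_i) in 𝓛X with φ(μ) = ⨆ᵢ μ(f_i) for all μ ∈ 𝓥X. -/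
open scoped ENNReal NNReal Topology

/-- `𝓛X`: the cone of lower semicontinuous functions `X → ℝ≥0∞`,
ordered pointwise. -/
abbrev LSCFun (X : Type*) [TopologicalSpace X] := {f : X → ℝ≥0∞ // LowerSemicontinuous f}

namespace LSCFun

variable {X : Type*} [TopologicalSpace X]

/-- Pointwise addition on `𝓛X`. -/
noncomputable instance : Add (LSCFun X) := ⟨fun f g => ⟨f.1 + g.1, f.2.add g.2⟩⟩

/-- Pointwise scalar multiplication by nonnegative reals on `𝓛X`. -/
noncomputable instance : SMul ℝ≥0 (LSCFun X) :=
  ⟨fun r f => ⟨fun x => (r : ℝ≥0∞) * f.1 x,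
    (ENNReal.continuous_const_mul (by simp)).comp_lowerSemicontinuous f.2
      fun _ _ hab => by first | exact mul_le_mul' le_rfl hab | (dsimp only; gcongr) | exact mul_le_mul_of_nonneg_left hab (zero_le _)⟩⟩

/-- The pointwise supremum of a set of lower semicontinuous functions,
again lower semicontinuous. -/
noncomputable def supOf (S : Set (LSCFun X)) : LSCFun X :=
  ⟨fun x => ⨆ f ∈ S, f.1 x, by
    simp only [iSup_subtype']
    exact lowerSemicontinuous_iSup fun f => f.1.2⟩

/-- Scott continuity of a functional `μ : 𝓛X → ℝ≥0∞`: `μ` preserves pointwise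
suprema of nonempty (pointwise-)directed families in `𝓛X`. -/
def ScottCont (μ : LSCFun X → ℝ≥0∞) : Prop :=
  ∀ S : Set (LSCFun X), S.Nonempty → DirectedOn (· ≤ ·) S →
    μ (supOf S) = ⨆ f ∈ S, μ f

end LSCFun

/-- `𝓥X`: the valuation powerdomain, consisting of the linear Scott-continuous
functionals `μ : 𝓛X → ℝ≥0∞`. -/
def ValuationPD (X : Type*) [TopologicalSpace X] : Set ((LSCFun X) → ℝ≥0∞) :=
  {μ | (∀ f g : LSCFun X, μ (f + g) = μ f + μ g) ∧
       (∀ (r : ℝ≥0) (f : LSCFun X), μ (r • f) = (r : ℝ≥0∞) * μ f) ∧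
       LSCFun.ScottCont μ}

/-- The weak*upper topology on `𝓥X`, generated by the subbasic open sets
`{μ | r < μ(f)}` for `f ∈ 𝓛X` and `r : ℝ≥0`. -/
def weakStarUpper (X : Type*) [TopologicalSpace X] : TopologicalSpace (ValuationPD X) :=
  TopologicalSpace.generateFrom
    {S | ∃ (f : LSCFun X) (r : ℝ≥0), S = {μ : ValuationPD X | (r : ℝ≥0∞) < μ.1 f}}

/-!
Fix `r < φ μ`. Lower semicontinuity of `φ` gives finitely many `g` with `1 < μ g` such that
`r < φ ν` as soon as `1 < ν g` for all of them; by homogeneity, every `ν` then satisfies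
`ν (r • g) ≤ φ ν` for one of these `g`. A minimax argument replaces "one of finitely many" by a
single convex combination `f` of the `r • g`: `ν f ≤ φ ν` for all `ν`, and still `r ≤ μ f`.
The combination is built two functions at a time. For two functions the admissible weights form,
for each `ν`, a compact interval of `[0, 1]`; any two of these intervals meet because `𝓥X` is a
cone and `φ` is linear, hence all of them meet (Helly's theorem on the line).
-/

theorem exists_mem_iInter_of_pairwise_inter_nonempty {α ι : Type*}
    [ConditionallyCompleteLinearOrder α] [TopologicalSpace α] [OrderTopology α] [Nonempty ι]
    {B : ι → Set α} (hcompact : ∀ i, IsCompact (B i)) (hconn : ∀ i, (B i).OrdConnected)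
    (hpair : ∀ i j, (B i ∩ B j).Nonempty) : (⋂ i, B i).Nonempty := by
  have hne : ∀ i, (B i).Nonempty := fun i => by simpa using hpair i i
  have hle : ∀ i j, sInf (B i) ≤ sSup (B j) := fun i j =>
    let ⟨_, hxi, hxj⟩ := hpair i j
    (csInf_le (hcompact i).bddBelow hxi).trans (le_csSup (hcompact j).bddAbove hxj)
  refine ⟨⨆ i, sInf (B i), Set.mem_iInter.2 fun j => (hconn j).out
    ((hcompact j).sInf_mem (hne j)) ((hcompact j).sSup_mem (hne j)) ⟨?_, ciSup_le (hle · j)⟩⟩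
  exact le_ciSup ⟨sSup (B j), Set.forall_mem_range.2 (hle · j)⟩ j

theorem Continuous.lowerSemicontinuous_coe_mul_const {α : Type*} [TopologicalSpace α]
    {g : α → ℝ≥0} (hg : Continuous g) (x : ℝ≥0∞) :
    LowerSemicontinuous fun a => (g a : ℝ≥0∞) * x := by
  intro a
  rcases eq_or_ne (g a) 0 with h | h
  · intro y hy
    simp [h] at hy
  · exact ContinuousAt.lowerSemicontinuousAt <|
      ENNReal.Tendsto.mul_const (ENNReal.continuous_coe.comp hg).continuousAt
        (Or.inl (ENNReal.coe_ne_zero.2 h))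

noncomputable def convexComb (t : ℝ≥0) (x y : ℝ≥0∞) : ℝ≥0∞ :=
  ((1 - t : ℝ≥0) : ℝ≥0∞) * x + t * y

section ConvexComb

variable {t : ℝ≥0} {x y z : ℝ≥0∞}

@[simp] theorem convexComb_zero (x y : ℝ≥0∞) : convexComb 0 x y = x := by simp [convexComb]

@[simp] theorem convexComb_one (x y : ℝ≥0∞) : convexComb 1 x y = y := by simp [convexComb]

theorem convexComb_self (ht : t ≤ 1) (x : ℝ≥0∞) : convexComb t x x = x := by
  rw [convexComb, ← add_mul, ← ENNReal.coe_add, tsub_add_cancel_of_le ht, ENNReal.coe_one, one_mul]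

theorem convexComb_le (ht : t ≤ 1) (hx : x ≤ z) (hy : y ≤ z) : convexComb t x y ≤ z :=
  calc convexComb t x y ≤ convexComb t z z := by unfold convexComb; gcongr
    _ = z := convexComb_self ht z

theorem le_convexComb (ht : t ≤ 1) (hx : z ≤ x) (hy : z ≤ y) : z ≤ convexComb t x y :=
  calc z = convexComb t z z := (convexComb_self ht z).symm
    _ ≤ convexComb t x y := by unfold convexComb; gcongr

theorem convexComb_symm (ht : t ≤ 1) (x y : ℝ≥0∞) : convexComb t x y = convexComb (1 - t) y x := by
  rw [convexComb, convexComb, tsub_tsub_cancel_of_le ht, add_comm]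

theorem monotoneOn_convexComb (hxy : x ≤ y) : MonotoneOn (convexComb · x y) (Set.Iic 1) := by
  intro s _ t ht hst
  have h₁ : ((1 - s : ℝ≥0) : ℝ≥0∞) = (1 - t : ℝ≥0) + (t - s : ℝ≥0) := by
    rw [← ENNReal.coe_add, tsub_add_tsub_cancel ht hst]
  have h₂ : (t : ℝ≥0∞) = (t - s : ℝ≥0) + s := by
    rw [← ENNReal.coe_add, tsub_add_cancel_of_le hst]
  calc convexComb s x y = (1 - t : ℝ≥0) * x + ((t - s : ℝ≥0) * x + s * y) := by
        rw [convexComb, h₁]; ring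
    _ ≤ (1 - t : ℝ≥0) * x + ((t - s : ℝ≥0) * y + s * y) := by gcongr
    _ = convexComb t x y := by rw [convexComb, h₂]; ring

theorem antitoneOn_convexComb (hyx : y ≤ x) : AntitoneOn (convexComb · x y) (Set.Iic 1) := by
  intro s hs t ht hst
  simp only [convexComb_symm hs, convexComb_symm ht]
  exact monotoneOn_convexComb hyx (Set.mem_Iic.2 tsub_le_self) (Set.mem_Iic.2 tsub_le_self)
    (tsub_le_tsub_left hst 1)

theorem lowerSemicontinuous_convexComb (x y : ℝ≥0∞) :
    LowerSemicontinuous (convexComb · x y) :=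
  ((continuous_const.sub continuous_id).lowerSemicontinuous_coe_mul_const x).add
    (continuous_id.lowerSemicontinuous_coe_mul_const y)

theorem isCompact_setOf_convexComb_le (x y z : ℝ≥0∞) :
    IsCompact {t | t ≤ 1 ∧ convexComb t x y ≤ z} :=
  (Set.Icc_bot (a := (1 : ℝ≥0)) ▸ isCompact_Icc).inter_right
    ((lowerSemicontinuous_convexComb x y).isClosed_preimage z)

theorem ordConnected_setOf_convexComb_le (x y z : ℝ≥0∞) :
    {t | t ≤ 1 ∧ convexComb t x y ≤ z}.OrdConnected := by
  refine ⟨fun s hs t ht u hu => ⟨hu.2.trans ht.1, ?_⟩⟩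
  rcases le_total x y with hxy | hyx
  · exact (monotoneOn_convexComb hxy (hu.2.trans ht.1) ht.1 hu.2).trans ht.2
  · exact (antitoneOn_convexComb hyx hs.1 (hu.2.trans ht.1) hu.1).trans hs.2

end ConvexComb

theorem exists_convexComb_le_pair_real {a b c a' b' c' : ℝ} (hac : a ≤ c) (hcb : c < b)
    (hb'c' : b' ≤ c') (hc'a' : c' < a')
    (H : ∀ s t : ℝ, 0 < s → 0 < t →
      s * a + t * a' ≤ s * c + t * c' ∨ s * b + t * b' ≤ s * c + t * c') :
    ∃ t : ℝ, 0 ≤ t ∧ t ≤ 1 ∧ (1 - t) * a + t * b ≤ c ∧ (1 - t) * a' + t * b' ≤ c' := by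
  have hs : 0 < a' - b' := by linarith
  -- With the weights `a' - b'` and `b - a`, both alternatives of `H` reduce to `key`.
  have key : a' * b - a * b' ≤ (a' - b') * c + (b - a) * c' := by
    rcases H (a' - b') (b - a) hs (by linarith) with h | h <;> linarith
  refine ⟨(a' - c') / (a' - b'), by positivity, (div_le_one hs).2 (by linarith), ?_, ?_⟩
  all_goals
    rw [one_sub_div hs.ne', div_mul_eq_mul_div, div_mul_eq_mul_div, ← add_div, div_le_iff₀ hs]
    linarith

theorem ENNReal.exists_pos_add_mul_lt {p q u : ℝ≥0∞} (hpq : p < q) (hu : u ≠ ⊤) :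
    ∃ t : ℝ≥0, 0 < t ∧ p + t * u < q := by
  obtain ⟨t, ht, htu⟩ := ENNReal.exists_nnreal_pos_mul_lt hu (tsub_pos_of_lt hpq).ne'
  exact ⟨t, ht, lt_tsub_iff_left.1 htu⟩

theorem exists_convexComb_le_pair {a b c a' b' c' : ℝ≥0∞} (hac : a ≤ c) (hcb : c < b)
    (hb'c' : b' ≤ c') (hc'a' : c' < a')
    (H : ∀ s t : ℝ≥0, 0 < s → 0 < t →
      s * a + t * a' ≤ s * c + t * c' ∨ s * b + t * b' ≤ s * c + t * c') :
    ∃ t : ℝ≥0, t ≤ 1 ∧ convexComb t a b ≤ c ∧ convexComb t a' b' ≤ c' := by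
  have hc : c ≠ ⊤ := hcb.ne_top
  have hc' : c' ≠ ⊤ := hc'a'.ne_top
  -- An infinite `a'` or `b` would make both alternatives of `H` fail for a small weight.
  have ha' : a' ≠ ⊤ := by
    rintro rfl
    obtain ⟨t, ht, hlt⟩ := ENNReal.exists_pos_add_mul_lt hcb hc'
    rcases H 1 t one_pos ht with h | h <;> simp only [ENNReal.coe_one, one_mul] at h
    · rw [ENNReal.mul_top (ENNReal.coe_ne_zero.2 ht.ne'), add_top, top_le_iff] at h
      rw [h] at hlt
      exact not_top_lt hlt
    · exact (le_self_add.trans h).not_gt hlt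
  have hb : b ≠ ⊤ := by
    rintro rfl
    obtain ⟨s, hs, hlt⟩ := ENNReal.exists_pos_add_mul_lt hc'a' hc
    rcases H s 1 hs one_pos with h | h <;> simp only [ENNReal.coe_one, one_mul] at h
    · exact (le_add_self.trans h).not_gt (add_comm (s * c) c' ▸ hlt)
    · rw [ENNReal.mul_top (ENNReal.coe_ne_zero.2 hs.ne'), top_add, top_le_iff] at h
      rw [add_comm, h] at hlt
      exact not_top_lt hlt
  lift a to ℝ≥0 using ne_top_of_le_ne_top hc hac
  lift b to ℝ≥0 using hb
  lift c to ℝ≥0 using hc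
  lift a' to ℝ≥0 using ha'
  lift b' to ℝ≥0 using ne_top_of_le_ne_top hc' hb'c'
  lift c' to ℝ≥0 using hc'
  obtain ⟨t, ht0, ht1, h, h'⟩ := exists_convexComb_le_pair_real (a := a) (b := b) (c := c)
    (a' := a') (b' := b') (c' := c') (by exact_mod_cast hac) (by exact_mod_cast hcb)
    (by exact_mod_cast hb'c') (by exact_mod_cast hc'a') fun s t hs ht => by
      simpa only [← ENNReal.coe_mul, ← ENNReal.coe_add, ENNReal.coe_le_coe, ← NNReal.coe_le_coe,
        NNReal.coe_add, NNReal.coe_mul, Real.coe_toNNReal _ hs.le, Real.coe_toNNReal _ ht.le]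
        using H s.toNNReal t.toNNReal (Real.toNNReal_pos.2 hs) (Real.toNNReal_pos.2 ht)
  lift t to ℝ≥0 using ht0
  refine ⟨t, by exact_mod_cast ht1, ?_, ?_⟩ <;>
  · rw [convexComb, ← ENNReal.coe_mul, ← ENNReal.coe_mul, ← ENNReal.coe_add, ENNReal.coe_le_coe,
      ← NNReal.coe_le_coe]
    push_cast [NNReal.coe_sub (show t ≤ 1 by exact_mod_cast ht1)]
    assumption

theorem exists_forall_convexComb_le {V : Type*} {a b c : V → ℝ≥0∞}
    (hmin : ∀ ν, a ν ≤ c ν ∨ b ν ≤ c ν)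
    (hcone : ∀ ν ν' (s t : ℝ≥0), 0 < s → 0 < t → ∃ ω,
      a ω = s * a ν + t * a ν' ∧ b ω = s * b ν + t * b ν' ∧ c ω = s * c ν + t * c ν') :
    ∃ t : ℝ≥0, t ≤ 1 ∧ ∀ ν, convexComb t (a ν) (b ν) ≤ c ν := by
  rcases isEmpty_or_nonempty V with _ | _
  · exact ⟨0, zero_le_one, isEmptyElim⟩
  set B : V → Set ℝ≥0 := fun ν => {t | t ≤ 1 ∧ convexComb t (a ν) (b ν) ≤ c ν}
  have zero_mem : ∀ ν, a ν ≤ c ν → 0 ∈ B ν := fun ν h => ⟨zero_le_one, by simpa⟩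
  have one_mem : ∀ ν, b ν ≤ c ν → 1 ∈ B ν := fun ν h => ⟨le_rfl, by simpa⟩
  have hmixed : ∀ ν ν', a ν ≤ c ν → b ν' ≤ c ν' → (B ν ∩ B ν').Nonempty := by
    intro ν ν' hν hν'
    by_cases h₀ : a ν' ≤ c ν'
    · exact ⟨0, zero_mem ν hν, zero_mem ν' h₀⟩
    by_cases h₁ : b ν ≤ c ν
    · exact ⟨1, one_mem ν h₁, one_mem ν' hν'⟩
    obtain ⟨t, ht, h, h'⟩ := exists_convexComb_le_pair hν (not_le.1 h₁) hν' (not_le.1 h₀)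
      fun s t hs ht => by
        obtain ⟨ω, ha, hb, hc⟩ := hcone ν ν' s t hs ht
        simpa only [ha, hb, hc] using hmin ω
    exact ⟨t, ⟨ht, h⟩, ⟨ht, h'⟩⟩
  obtain ⟨t, ht⟩ := exists_mem_iInter_of_pairwise_inter_nonempty (B := B)
    (fun ν => isCompact_setOf_convexComb_le _ _ _) (fun ν => ordConnected_setOf_convexComb_le _ _ _)
    fun ν ν' => by
      rcases hmin ν with h | h <;> rcases hmin ν' with h' | h'
      · exact ⟨0, zero_mem ν h, zero_mem ν' h'⟩
      · exact hmixed ν ν' h h'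
      · exact Set.inter_comm _ _ ▸ hmixed ν' ν h' h
      · exact ⟨1, one_mem ν h, one_mem ν' h'⟩
  rw [Set.mem_iInter] at ht
  exact ⟨t, (ht (Classical.arbitrary V)).1, fun ν => (ht ν).2⟩

namespace ValuationPD

variable {X : Type*} [TopologicalSpace X]

theorem monotone (μ : ValuationPD X) : Monotone μ.1 := by
  intro f g hfg
  have hsup : LSCFun.supOf {f, g} = g :=
    Subtype.ext <| funext fun x => by
      change (⨆ h ∈ ({f, g} : Set (LSCFun X)), h.1 x) = g.1 x
      rw [iSup_insert, iSup_singleton, sup_of_le_right (hfg x)]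
  have := μ.2.2.2 {f, g} (Set.insert_nonempty f {g}) (directedOn_pair hfg)
  rw [hsup, iSup_insert, iSup_singleton] at this
  exact this ▸ le_sup_left

noncomputable instance : Add (ValuationPD X) :=
  ⟨fun μ ν => ⟨μ.1 + ν.1, fun f g => by simp only [Pi.add_apply, μ.2.1, ν.2.1]; ring,
    fun r f => by simp only [Pi.add_apply, μ.2.2.1, ν.2.2.1]; ring,
    fun S hS hdir => by
      have := hS.to_subtype
      simp only [Pi.add_apply, μ.2.2.2 S hS hdir, ν.2.2.2 S hS hdir, iSup_subtype']
      refine ENNReal.iSup_add_iSup fun f g => ?_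
      obtain ⟨k, hk, hfk, hgk⟩ := hdir f.1 f.2 g.1 g.2
      exact ⟨⟨k, hk⟩, add_le_add (monotone μ hfk) (monotone ν hgk)⟩⟩⟩

noncomputable instance : SMul ℝ≥0 (ValuationPD X) :=
  ⟨fun t μ => ⟨fun f => t * μ.1 f, fun f g => by simp only [μ.2.1]; ring,
    fun r f => by simp only [μ.2.2.1]; ring,
    fun S hS hdir => by simp only [μ.2.2.2 S hS hdir, iSup_subtype', ENNReal.mul_iSup]⟩⟩

@[simp] theorem coe_add (μ ν : ValuationPD X) : (μ + ν).1 = μ.1 + ν.1 := rfl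
@[simp] theorem smul_apply (t : ℝ≥0) (μ : ValuationPD X) (f : LSCFun X) :
    (t • μ).1 f = t * μ.1 f := rfl

theorem apply_convexComb (ν : ValuationPD X) (t : ℝ≥0) (f g : LSCFun X) :
    ν.1 ((1 - t) • f + t • g) = convexComb t (ν.1 f) (ν.1 g) := by
  rw [ν.2.1, ν.2.2.1, ν.2.2.1, convexComb]

theorem exists_one_lt_of_lt {μ : ValuationPD X} {f : LSCFun X} {s : ℝ≥0} (hμ : s < μ.1 f) :
    ∃ g : LSCFun X, 1 < μ.1 g ∧ ∀ ν : ValuationPD X, 1 < ν.1 g → s < ν.1 f := by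
  obtain ⟨t, hst, htμ⟩ := ENNReal.lt_iff_exists_nnreal_btwn.1 hμ
  have ht : (t : ℝ≥0∞) ≠ 0 := (pos_of_gt hst).ne'
  have one_lt_iff : ∀ ν : ValuationPD X, 1 < ν.1 (t⁻¹ • f) ↔ t < ν.1 f := fun ν => by
    rw [ν.2.2.1, ENNReal.coe_inv (ENNReal.coe_ne_zero.1 ht), ← ENNReal.div_eq_inv_mul,
      ENNReal.lt_div_iff_mul_lt (Or.inl ht) (Or.inl ENNReal.coe_ne_top), one_mul]
  exact ⟨t⁻¹ • f, (one_lt_iff μ).2 htμ, fun ν hν => hst.trans ((one_lt_iff ν).1 hν)⟩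

theorem exists_finset_of_mem_open {U : Set (ValuationPD X)} (hU : IsOpen[weakStarUpper X] U)
    {μ : ValuationPD X} (hμ : μ ∈ U) :
    ∃ G : Finset (LSCFun X), (∀ g ∈ G, 1 < μ.1 g) ∧
      ∀ ν : ValuationPD X, (∀ g ∈ G, 1 < ν.1 g) → ν ∈ U := by
  classical
  let := weakStarUpper X
  obtain ⟨_, ⟨T, ⟨hT, hTsub⟩, rfl⟩, hμT, hTU⟩ :=
    (TopologicalSpace.isTopologicalBasis_of_subbasis rfl).exists_subset_of_mem_open hμ hU
  have hT₁ : ∀ S ∈ T, ∃ g : LSCFun X, 1 < μ.1 g ∧ ∀ ν : ValuationPD X, 1 < ν.1 g → ν ∈ S := by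
    intro S hS
    obtain ⟨f, s, rfl⟩ := hTsub hS
    exact exists_one_lt_of_lt (hμT _ hS)
  have : Nonempty (LSCFun X) := ⟨⟨0, lowerSemicontinuous_const⟩⟩
  choose! g hgμ hgν using hT₁
  refine ⟨hT.toFinset.image g, by simpa using hgμ, fun ν hν => hTU fun S hS => hgν S hS ν ?_⟩
  exact hν _ (Finset.mem_image_of_mem g (hT.mem_toFinset.2 hS))

end ValuationPD

section LinearFunctional

variable {X : Type*} [TopologicalSpace X] {φ : ValuationPD X → ℝ≥0∞}
  (hadd : ∀ μ ν, φ (μ + ν) = φ μ + φ ν) (hsmul : ∀ (r : ℝ≥0) μ, φ (r • μ) = r * φ μ)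

include hsmul in
theorem exists_le_of_forall_one_lt {r : ℝ≥0} (hr : r ≠ 0) {G : Finset (LSCFun X)}
    (hG : ∀ ν : ValuationPD X, (∀ g ∈ G, 1 < ν.1 g) → r < φ ν) (ν : ValuationPD X) :
    ∃ g ∈ G, r * ν.1 g ≤ φ ν := by
  -- Otherwise a rescaling `c⁻¹ • ν` satisfies `1 < ν g` on `G` but not `r < φ`.
  by_contra! h
  have hGne : G.Nonempty := by
    rw [Finset.nonempty_iff_ne_empty]
    rintro rfl
    simpa [hsmul] using hG ((0 : ℝ≥0) • ν) (by simp)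
  have hr' : (r : ℝ≥0∞) ≠ 0 := ENNReal.coe_ne_zero.2 hr
  obtain ⟨c, hc, hcν⟩ := ENNReal.lt_iff_exists_nnreal_btwn.1 <|
    (Finset.lt_inf'_iff hGne).2 fun g hg => ENNReal.div_lt_of_lt_mul' (h g hg)
  have hc0 : c ≠ 0 := by rintro rfl; simp at hc
  have := hG (c⁻¹ • ν) fun g hg => by
    rw [ValuationPD.smul_apply, ENNReal.coe_inv hc0, ← ENNReal.div_eq_inv_mul,
      ENNReal.lt_div_iff_mul_lt (Or.inl (by simpa)) (Or.inl ENNReal.coe_ne_top), one_mul]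
    exact hcν.trans_le (Finset.inf'_le _ hg)
  rw [hsmul, ENNReal.coe_inv hc0, ← ENNReal.div_eq_inv_mul,
    ENNReal.lt_div_iff_mul_lt (Or.inl (by simpa)) (Or.inl ENNReal.coe_ne_top)] at this
  rw [ENNReal.div_lt_iff (Or.inl hr') (Or.inl ENNReal.coe_ne_top), mul_comm] at hc
  exact this.not_gt hc

include hadd hsmul

theorem exists_convexComb_of_forall_le_or_le (f g : LSCFun X) (s : Finset (LSCFun X))
    (hcover : ∀ ν : ValuationPD X, ν.1 f ≤ φ ν ∨ ν.1 g ≤ φ ν ∨ ∃ h ∈ s, ν.1 h ≤ φ ν) :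
    ∃ t : ℝ≥0, t ≤ 1 ∧
      ∀ ν : ValuationPD X, ν.1 ((1 - t) • f + t • g) ≤ φ ν ∨ ∃ h ∈ s, ν.1 h ≤ φ ν := by
  obtain ⟨t, ht, hle⟩ := exists_forall_convexComb_le
    (V := {ν : ValuationPD X // ∀ h ∈ s, φ ν < ν.1 h})
    (a := fun ν => ν.1.1 f) (b := fun ν => ν.1.1 g) (c := fun ν => φ ν)
    (fun ν => (or_assoc.2 (hcover ν)).resolve_right fun ⟨h, hs, hle⟩ => (ν.2 h hs).not_ge hle)
    fun ν ν' s t hs ht => by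
      refine ⟨⟨s • ν.1 + t • ν'.1, fun h hh => ?_⟩, rfl, rfl, by simp [hadd, hsmul]⟩
      simp only [hadd, hsmul, ValuationPD.coe_add, Pi.add_apply, ValuationPD.smul_apply]
      exact ENNReal.add_lt_add
        (ENNReal.mul_lt_mul_right (by simpa using hs.ne') ENNReal.coe_ne_top (ν.2 h hh))
        (ENNReal.mul_lt_mul_right (by simpa using ht.ne') ENNReal.coe_ne_top (ν'.2 h hh))
  refine ⟨t, ht, fun ν => or_iff_not_imp_right.2 fun hν => ?_⟩
  push Not at hν
  rw [ValuationPD.apply_convexComb]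
  exact hle ⟨ν, hν⟩

theorem exists_forall_le_of_forall_exists_le (μ : ValuationPD X) (r : ℝ≥0∞)
    (s : Finset (LSCFun X)) (f : LSCFun X)
    (hcover : ∀ ν : ValuationPD X, ν.1 f ≤ φ ν ∨ ∃ g ∈ s, ν.1 g ≤ φ ν)
    (hf : r ≤ μ.1 f) (hs : ∀ g ∈ s, r ≤ μ.1 g) :
    ∃ f : LSCFun X, (∀ ν : ValuationPD X, ν.1 f ≤ φ ν) ∧ r ≤ μ.1 f := by
  classical
  induction s using Finset.induction_on generalizing f with
  | empty => exact ⟨f, fun ν => (hcover ν).resolve_right (by simp), hf⟩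
  | insert g s _ ih =>
    obtain ⟨t, ht, hcomb⟩ := exists_convexComb_of_forall_le_or_le hadd hsmul f g s
      fun ν => by simpa only [Finset.exists_mem_insert] using hcover ν
    refine ih _ hcomb ?_ fun g hg => hs g (Finset.mem_insert_of_mem hg)
    rw [ValuationPD.apply_convexComb]
    exact le_convexComb ht hf (hs g (Finset.mem_insert_self g s))

theorem exists_forall_le_of_lt
    (hlsc : ∀ r : ℝ≥0, IsOpen[weakStarUpper X] {μ : ValuationPD X | (r : ℝ≥0∞) < φ μ})
    {μ : ValuationPD X} {r : ℝ≥0} (hr : r ≠ 0) (hrμ : r < φ μ) :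
    ∃ f : LSCFun X, (∀ ν : ValuationPD X, ν.1 f ≤ φ ν) ∧ r ≤ μ.1 f := by
  classical
  obtain ⟨G, hGμ, hG⟩ := ValuationPD.exists_finset_of_mem_open (hlsc r) hrμ
  have hcover : ∀ ν : ValuationPD X, ∃ g ∈ G, ν.1 (r • g) ≤ φ ν := fun ν => by
    simpa only [ν.2.2.1] using exists_le_of_forall_one_lt hsmul hr hG ν
  have hrG : ∀ g ∈ G, (r : ℝ≥0∞) ≤ μ.1 (r • g) := fun g hg => by
    rw [μ.2.2.1]
    exact le_mul_of_one_le_right' (hGμ g hg).le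
  obtain ⟨g₀, hg₀, -⟩ := hcover μ
  refine exists_forall_le_of_forall_exists_le hadd hsmul μ r (G.image (r • ·)) (r • g₀)
    (fun ν => Or.inr (Finset.exists_mem_image.2 (hcover ν))) (hrG g₀ hg₀)
    (Finset.forall_mem_image.2 hrG)

end LinearFunctional

/-- Every linear functional on `𝓥X` that is lower semicontinuous for the
weak*upper topology is the pointwise supremum of the evaluation functionals
below it; in particular it is the pointwise supremum of a family of
evaluations. -/
theorem lsc_linear_eq_sup_evaluations {X : Type*} [TopologicalSpace X]
    (φ : ValuationPD X → ℝ≥0∞)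
    (hφ_add : ∀ μ ν σ : ValuationPD X, σ.1 = μ.1 + ν.1 → φ σ = φ μ + φ ν)
    (hφ_hom : ∀ (r : ℝ≥0) (μ σ : ValuationPD X),
      σ.1 = (fun f => (r : ℝ≥0∞) * μ.1 f) → φ σ = (r : ℝ≥0∞) * φ μ)
    (hφ_lsc : ∀ r : ℝ≥0,
      IsOpen[weakStarUpper X] {μ : ValuationPD X | (r : ℝ≥0∞) < φ μ}) :
    (∀ μ : ValuationPD X,
      φ μ = ⨆ (f : LSCFun X) (_ : ∀ ν : ValuationPD X, ν.1 f ≤ φ ν), μ.1 f) ∧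
    ∃ s : Set (LSCFun X), ∀ μ : ValuationPD X, φ μ = ⨆ f ∈ s, μ.1 f := by
  have hadd : ∀ μ ν, φ (μ + ν) = φ μ + φ ν := fun μ ν => hφ_add μ ν _ rfl
  have hsmul : ∀ (r : ℝ≥0) μ, φ (r • μ) = r * φ μ := fun r μ => hφ_hom r μ _ rfl
  have hsup : ∀ μ : ValuationPD X,
      φ μ = ⨆ (f : LSCFun X) (_ : ∀ ν : ValuationPD X, ν.1 f ≤ φ ν), μ.1 f := by
    refine fun μ => le_antisymm (ENNReal.le_of_forall_nnreal_lt fun r hr => ?_)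
      (iSup₂_le fun f hf => hf μ)
    rcases eq_or_ne r 0 with rfl | hr0
    · simp
    obtain ⟨f, hf, hrf⟩ := exists_forall_le_of_lt hadd hsmul hφ_lsc hr0 hr
    exact le_iSup₂_of_le f hf hrf
  exact ⟨hsup, _, hsup⟩
end

section
/- Let C = {x ∈ ℝ≥0 × ℝ≥0 | x.2 ≤ x.1} and D = ℝ≥0 × ℝ≥0, with the bilinear pairing ⟨x, y⟩ = x.1 * y.1 + x.2 * y.2, and let w(D,C) be the topology on D generated by the sets {y | r < ⟨x, y⟩} for x ∈ C and r : ℝ≥0. Then for y, y' ∈ D, every w(D,C)-open set containing y also contains y' if and only if y.1 ≤ y'.1 and y.1 + y.2 ≤ y'.1 + y'.2. (That is, the specialization order of w(D,C) is given by these two inequalities.) -/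
open scoped ENNReal NNReal Topology

/-- The weak upper topology `w(D,C)` on `D = ℝ≥0 × ℝ≥0` determined by the cone
`C = {x | x.2 ≤ x.1}` via the standard inner product pairing. -/
def weakUpperSierpinski : TopologicalSpace (ℝ≥0 × ℝ≥0) :=
  TopologicalSpace.generateFrom
    {S | ∃ x : ℝ≥0 × ℝ≥0, x.2 ≤ x.1 ∧ ∃ r : ℝ≥0,
      S = {y : ℝ≥0 × ℝ≥0 | r < x.1 * y.1 + x.2 * y.2}}

/-! Each set `{y | r < ⟨x, y⟩}` is determined by the value of the pairing, so `y'` lies in every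
open set around `y` exactly when `⟨x, y⟩ ≤ ⟨x, y'⟩` for all `x ∈ C`. The dual cone of
`C = {x | x.2 ≤ x.1}` is spanned by the extreme rays `(1, 0)` and `(1, 1)`, which give the two
inequalities. -/

theorem TopologicalSpace.specializes_generateFrom_iff {α : Type*} {g : Set (Set α)} {x y : α} :
    @Specializes α (generateFrom g) x y ↔ ∀ s ∈ g, y ∈ s → x ∈ s := by
  let _ := generateFrom g
  simp only [Specializes, nhds_generateFrom (a := y), le_iInf₂_iff, Filter.le_principal_iff,
    Set.mem_ofPred_eq, and_imp]
  exact ⟨fun h s hs hy => mem_of_mem_nhds (h s hy hs),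
    fun h s hy hs => (isOpen_generateFrom_of_mem hs).mem_nhds (h s hs hy)⟩

section DualCone

variable {R : Type*} [CommSemiring R] [PartialOrder R] [CanonicallyOrderedAdd R] [IsOrderedRing R]

theorem pairing_le_pairing_of_le {x y y' : R × R} (hx : x.2 ≤ x.1)
    (h₁ : y.1 ≤ y'.1) (h₂ : y.1 + y.2 ≤ y'.1 + y'.2) :
    x.1 * y.1 + x.2 * y.2 ≤ x.1 * y'.1 + x.2 * y'.2 := by
  obtain ⟨d, hd⟩ := exists_add_of_le hx
  rw [hd]
  calc (x.2 + d) * y.1 + x.2 * y.2 = d * y.1 + x.2 * (y.1 + y.2) := by ring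
    _ ≤ d * y'.1 + x.2 * (y'.1 + y'.2) := by gcongr
    _ = (x.2 + d) * y'.1 + x.2 * y'.2 := by ring

theorem forall_pairing_le_pairing_iff {y y' : R × R} :
    (∀ x : R × R, x.2 ≤ x.1 → x.1 * y.1 + x.2 * y.2 ≤ x.1 * y'.1 + x.2 * y'.2) ↔
      y.1 ≤ y'.1 ∧ y.1 + y.2 ≤ y'.1 + y'.2 := by
  refine ⟨fun h => ⟨?_, ?_⟩, fun ⟨h₁, h₂⟩ x hx => pairing_le_pairing_of_le hx h₁ h₂⟩
  · simpa using h (1, 0) zero_le_one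
  · simpa using h (1, 1) le_rfl

end DualCone

/-- The specialization order of the weak upper topology `w(D,C)` with
`C = {x | x.2 ≤ x.1}` and `D = ℝ≥0 × ℝ≥0`: `y'` belongs to every open set
containing `y` iff `y.1 ≤ y'.1` and `y.1 + y.2 ≤ y'.1 + y'.2`. -/
theorem weakUpperSierpinski_specialization (y y' : ℝ≥0 × ℝ≥0) :
    (∀ U : Set (ℝ≥0 × ℝ≥0), IsOpen[weakUpperSierpinski] U → y ∈ U → y' ∈ U) ↔
      (y.1 ≤ y'.1 ∧ y.1 + y.2 ≤ y'.1 + y'.2) := by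
  rw [← @specializes_iff_forall_open _ weakUpperSierpinski, weakUpperSierpinski,
    TopologicalSpace.specializes_generateFrom_iff, ← forall_pairing_le_pairing_iff]
  constructor
  · intro h x hx
    exact le_of_forall_lt fun r hr => h _ ⟨x, hx, r, rfl⟩ hr
  · rintro h _ ⟨x, hx, r, rfl⟩ hr
    exact hr.trans_le (h x hx)
end

section
/- Finite-dimensional duality for full closed cones: Let n ≥ 1 and let C, D ⊆ (Fin n → ℝ) be topologically closed subsets, each closed under addition and under scalar multiplication by nonnegative reals, each with nonempty interior (for the Euclidean topology), and such that ⟨c, d⟩ := ∑ i, c i * d i ≥ 0 for all c ∈ C, d ∈ D. Let φ : (Fin n → ℝ) → ℝ satisfy: φ(y) ≥ 0, φ(y + y') = φ(y) + φ(y'), and φ(r • y) = r * φ(y) for all y, y' ∈ D and r : ℝ with r ≥ 0; and suppose φ is lower semicontinuous on D for the weak upper topology w(D,C), i.e. for every r ≥ 0 the set {y ∈ D | r < φ(y)} is open in the topology on D induced by the topology on Fin n → ℝ generated by the sets {y | s < ⟨x, y⟩} for x ∈ C and s ≥ 0. Then there exists a unique x₀ ∈ C such that φ(y) = ⟨x₀,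 y⟩ for all y ∈ D. -/
/-!
Since `D` has an interior point, `D - D` is the whole space, so `φ` extends to a linear
functional: `φ = ⟨x₀, ·⟩` on `D`. Every open set of `w(D, C)` is stable under translation by the
dual cone `C* = {z | ∀ c ∈ C, 0 ≤ ⟨c, z⟩}`, so lower semicontinuity forces `φ y ≤ φ y'` whenever
`y, y' ∈ D` and `y' - y ∈ C*`. Applied to an interior point `y₀` and `y₀ + ε z` this gives
`0 ≤ ⟨x₀, z⟩` for all `z ∈ C*`, hence `x₀ ∈ C** = C` by Farkas' lemma. Uniqueness again uses
`D - D = univ`.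
-/

open scoped Topology

open Set Pointwise

theorem TopologicalSpace.GenerateOpen.mapsTo {X : Type*} {g : Set (Set X)} {f : X → X}
    (hg : ∀ S ∈ g, MapsTo f S S) {U : Set X} (hU : GenerateOpen g U) : MapsTo f U U := by
  induction hU with
  | basic S hS => exact hg S hS
  | univ => exact mapsTo_univ f Set.univ
  | inter U V _ _ hU hV => exact hU.inter_inter hV
  | sUnion S _ hS => exact fun x ⟨V, hVS, hxV⟩ ↦ ⟨V, hVS, hS V hVS hxV⟩

section ConeExtension

variable {𝕜 E : Type*} [Field 𝕜] [LinearOrder 𝕜] [IsStrictOrderedRing 𝕜]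
  [AddCommGroup E] [Module 𝕜 E] {D : Set E} {φ : E → 𝕜}

theorem exists_linearMap_eqOn_of_sub_eq_univ (hD_add : ∀ x ∈ D, ∀ y ∈ D, x + y ∈ D)
    (hD_smul : ∀ r : 𝕜, 0 ≤ r → ∀ x ∈ D, r • x ∈ D) (hD : D - D = univ)
    (hφ_add : ∀ y ∈ D, ∀ y' ∈ D, φ (y + y') = φ y + φ y')
    (hφ_smul : ∀ r : 𝕜, 0 ≤ r → ∀ y ∈ D, φ (r • y) = r * φ y) :
    ∃ f : E →ₗ[𝕜] 𝕜, EqOn f φ D := by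
  have hsub : ∀ v, ∃ a ∈ D, ∃ b ∈ D, a - b = v := fun v ↦ mem_sub.mp (hD ▸ mem_univ v)
  choose a ha b hb hab using hsub
  -- `φ (a - b) := φ a - φ b` is well defined since `a - b = a' - b'` means `a + b' = a' + b`.
  have hwd : ∀ v, ∀ a' ∈ D, ∀ b' ∈ D, a' - b' = v → φ (a v) - φ (b v) = φ a' - φ b' := by
    intro v a' ha' b' hb' hv
    have hsum : a v + b' = a' + b v := by rw [← sub_eq_sub_iff_add_eq_add, hab, hv]
    have := congrArg φ hsum
    rw [hφ_add _ (ha v) _ hb', hφ_add _ ha' _ (hb v)] at this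
    linear_combination this
  refine ⟨{ toFun v := φ (a v) - φ (b v), map_add' := fun v w ↦ ?_, map_smul' := fun r v ↦ ?_ },
    fun y hy ↦ ?_⟩
  · rw [hwd (v + w) _ (hD_add _ (ha v) _ (ha w)) _ (hD_add _ (hb v) _ (hb w))
      (by rw [add_sub_add_comm, hab, hab]), hφ_add _ (ha v) _ (ha w), hφ_add _ (hb v) _ (hb w)]
    ring
  · rcases le_total 0 r with hr | hr
    · rw [hwd (r • v) _ (hD_smul r hr _ (ha v)) _ (hD_smul r hr _ (hb v))
        (by rw [← smul_sub, hab]), hφ_smul r hr _ (ha v), hφ_smul r hr _ (hb v)]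
      simp only [smul_eq_mul, RingHom.id_apply]; ring
    · have hr' : 0 ≤ -r := neg_nonneg.mpr hr
      rw [hwd (r • v) _ (hD_smul _ hr' _ (hb v)) _ (hD_smul _ hr' _ (ha v))
        (by rw [← smul_sub, neg_smul, ← smul_neg, neg_sub, hab]), hφ_smul _ hr' _ (ha v),
        hφ_smul _ hr' _ (hb v)]
      simp only [smul_eq_mul, RingHom.id_apply]; ring
  · simp only [LinearMap.coe_mk, AddHom.coe_mk]
    rw [hwd y _ (hD_add _ hy _ hy) _ hy (add_sub_cancel_right y y), hφ_add _ hy _ hy]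
    ring

end ConeExtension

section Interior

variable {E : Type*} [TopologicalSpace E] [AddCommGroup E] [Module ℝ E] [ContinuousAdd E]
  [ContinuousSMul ℝ E] {D : Set E} {y₀ : E}

theorem exists_pos_add_smul_mem_of_mem_interior (hy₀ : y₀ ∈ interior D) (v : E) :
    ∃ ε : ℝ, 0 < ε ∧ y₀ + ε • v ∈ D := by
  have hcont : Continuous fun t : ℝ ↦ y₀ + t • v := by fun_prop
  have hnear : ∀ᶠ t in 𝓝[>] (0 : ℝ), y₀ + t • v ∈ D := by
    refine nhdsWithin_le_nhds (hcont.continuousAt.preimage_mem_nhds ?_)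
    simpa using mem_interior_iff_mem_nhds.mp hy₀
  exact (hnear.and self_mem_nhdsWithin).exists.imp fun ε h ↦ ⟨h.2, h.1⟩

theorem sub_eq_univ_of_mem_interior (hD_smul : ∀ r : ℝ, 0 ≤ r → ∀ x ∈ D, r • x ∈ D)
    (hy₀ : y₀ ∈ interior D) : D - D = univ := by
  refine eq_univ_of_forall fun v ↦ ?_
  obtain ⟨ε, hε, hεD⟩ := exists_pos_add_smul_mem_of_mem_interior hy₀ v
  have hε' : 0 ≤ ε⁻¹ := inv_nonneg.mpr hε.le
  refine ⟨ε⁻¹ • (y₀ + ε • v), hD_smul _ hε' _ hεD, ε⁻¹ • y₀,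
    hD_smul _ hε' _ (interior_subset hy₀), ?_⟩
  beta_reduce
  rw [smul_add, smul_smul, inv_mul_cancel₀ hε.ne', one_smul, add_sub_cancel_left]

end Interior

section DotProduct

variable {ι : Type*} [Fintype ι]

theorem mem_of_forall_dotProduct_nonneg {C : Set (ι → ℝ)} (hC_closed : IsClosed C)
    (hC_zero : 0 ∈ C) (hC_add : ∀ x ∈ C, ∀ y ∈ C, x + y ∈ C)
    (hC_smul : ∀ r : ℝ, 0 ≤ r → ∀ x ∈ C, r • x ∈ C) {x : ι → ℝ}
    (hx : ∀ z, (∀ c ∈ C, 0 ≤ c ⬝ᵥ z) → 0 ≤ x ⬝ᵥ z) : x ∈ C := by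
  classical
  let K : ProperCone ℝ (ι → ℝ) :=
    { carrier := C
      add_mem' := fun ha hb ↦ hC_add _ ha _ hb
      zero_mem' := hC_zero
      smul_mem' := fun r _ hy ↦ hC_smul r r.2 _ hy
      isClosed' := hC_closed }
  by_contra hxC
  obtain ⟨f, hfC, hfx⟩ := K.hyperplane_separation_point hxC
  set z := (dotProductEquiv ℝ ι).symm f.toLinearMap
  have hf : ∀ v, f v = v ⬝ᵥ z := fun v ↦ by
    rw [dotProduct_comm, ← dotProductEquiv_apply_apply, LinearEquiv.apply_symm_apply]; rfl
  exact (hf x ▸ hfx).not_ge (hx z fun c hc ↦ hf c ▸ hfC c hc)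

abbrev weakUpperTopology (C : Set (ι → ℝ)) : TopologicalSpace (ι → ℝ) :=
  .generateFrom {S | ∃ x ∈ C, ∃ s : ℝ, 0 ≤ s ∧ S = {y | s < x ⬝ᵥ y}}

theorem add_mem_of_isOpen_weakUpperTopology {C U : Set (ι → ℝ)}
    (hU : IsOpen[weakUpperTopology C] U) {y z : ι → ℝ} (hy : y ∈ U)
    (hz : ∀ x ∈ C, 0 ≤ x ⬝ᵥ z) : y + z ∈ U := by
  refine TopologicalSpace.GenerateOpen.mapsTo (f := (· + z)) (fun S hS y' hy' ↦ ?_) hU hy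
  obtain ⟨x, hx, s, -, rfl⟩ := hS
  change s < x ⬝ᵥ y' at hy'
  change s < x ⬝ᵥ (y' + z)
  rw [dotProduct_add]
  linarith [hz x hx]

theorem le_of_lsc_weakUpperTopology {C D : Set (ι → ℝ)} {φ : (ι → ℝ) → ℝ}
    (hφ_nonneg : ∀ y ∈ D, 0 ≤ φ y)
    (hφ_lsc : ∀ r : ℝ, 0 ≤ r → ∃ U, IsOpen[weakUpperTopology C] U ∧ {y ∈ D | r < φ y} = U ∩ D)
    {y y' : ι → ℝ} (hy : y ∈ D) (hy' : y' ∈ D) (hyy' : ∀ x ∈ C, 0 ≤ x ⬝ᵥ (y' - y)) :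
    φ y ≤ φ y' := by
  by_contra! hlt
  obtain ⟨U, hU, hUD⟩ := hφ_lsc (φ y') (hφ_nonneg y' hy')
  have hyU : y ∈ U := ((hUD ▸ ⟨hy, hlt⟩ : y ∈ U ∩ D)).1
  have hy'U : y' ∈ U := by simpa using add_mem_of_isOpen_weakUpperTopology hU hyU hyy'
  exact lt_irrefl _ (hUD.symm ▸ ⟨hy'U, hy'⟩ : y' ∈ {y ∈ D | φ y' < φ y}).2

end DotProduct

theorem finite_dimensional_cone_duality_general (n : ℕ)
    (C D : Set (Fin n → ℝ))
    (hC_closed : IsClosed C)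
    (hC_add : ∀ x ∈ C, ∀ y ∈ C, x + y ∈ C)
    (hC_smul : ∀ r : ℝ, 0 ≤ r → ∀ x ∈ C, r • x ∈ C)
    (hD_add : ∀ x ∈ D, ∀ y ∈ D, x + y ∈ D)
    (hD_smul : ∀ r : ℝ, 0 ≤ r → ∀ x ∈ D, r • x ∈ D)
    (hC_int : (interior C).Nonempty) (hD_int : (interior D).Nonempty)
    (φ : (Fin n → ℝ) → ℝ)
    (hφ_nonneg : ∀ y ∈ D, 0 ≤ φ y)
    (hφ_add : ∀ y ∈ D, ∀ y' ∈ D, φ (y + y') = φ y + φ y')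
    (hφ_smul : ∀ r : ℝ, 0 ≤ r → ∀ y ∈ D, φ (r • y) = r * φ y)
    (hφ_lsc : ∀ r : ℝ, 0 ≤ r → ∃ U : Set (Fin n → ℝ),
      IsOpen[TopologicalSpace.generateFrom
        {S | ∃ x ∈ C, ∃ s : ℝ, 0 ≤ s ∧ S = {y : Fin n → ℝ | s < ∑ i, x i * y i}}] U ∧
      {y ∈ D | r < φ y} = U ∩ D) :
    ∃! x₀ : Fin n → ℝ, x₀ ∈ C ∧ ∀ y ∈ D, φ y = ∑ i, x₀ i * y i := by
  obtain ⟨y₀, hy₀⟩ := hD_int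
  have hD_sub : D - D = univ := sub_eq_univ_of_mem_interior hD_smul hy₀
  obtain ⟨f, hf⟩ := exists_linearMap_eqOn_of_sub_eq_univ hD_add hD_smul hD_sub hφ_add hφ_smul
  obtain ⟨x₀, rfl⟩ := (dotProductEquiv ℝ (Fin n)).surjective f
  have hrep : ∀ y ∈ D, φ y = x₀ ⬝ᵥ y := fun y hy ↦ (hf hy).symm
  have hx₀_dual : ∀ z, (∀ c ∈ C, 0 ≤ c ⬝ᵥ z) → 0 ≤ x₀ ⬝ᵥ z := by
    intro z hz
    obtain ⟨ε, hε, hεD⟩ := exists_pos_add_smul_mem_of_mem_interior hy₀ z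
    have hle := le_of_lsc_weakUpperTopology hφ_nonneg hφ_lsc (interior_subset hy₀) hεD
      fun c hc ↦ by simpa [dotProduct_smul] using mul_nonneg hε.le (hz c hc)
    rw [hrep _ (interior_subset hy₀), hrep _ hεD, dotProduct_add, dotProduct_smul,
      smul_eq_mul, le_add_iff_nonneg_right] at hle
    exact nonneg_of_mul_nonneg_right hle hε
  have hC_zero : (0 : Fin n → ℝ) ∈ C := by
    obtain ⟨c, hc⟩ := hC_int
    simpa using hC_smul 0 le_rfl c (interior_subset hc)
  refine ⟨x₀, ⟨mem_of_forall_dotProduct_nonneg hC_closed hC_zero hC_add hC_smul hx₀_dual, hrep⟩,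
    fun x₁ ⟨_, hx₁⟩ ↦ dotProduct_eq _ _ fun v ↦ ?_⟩
  replace hx₁ : ∀ y ∈ D, φ y = x₁ ⬝ᵥ y := hx₁
  obtain ⟨a, ha, b, hb, rfl⟩ := hD_sub.symm ▸ mem_univ v
  rw [dotProduct_sub, dotProduct_sub, ← hx₁ a ha, ← hx₁ b hb, hrep a ha, hrep b hb]

/-- Finite-dimensional duality for full closed cones: if `C, D ⊆ ℝⁿ` are closed
cones with nonempty interior pairing nonnegatively, then every nonnegative
linear functional on `D` that is lower semicontinuous for the weak upper
topology `w(D,C)` is given by inner product with a unique element of `C`. -/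
theorem finite_dimensional_cone_duality (n : ℕ) (hn : 1 ≤ n)
    (C D : Set (Fin n → ℝ))
    (hC_closed : IsClosed C) (hD_closed : IsClosed D)
    (hC_add : ∀ x ∈ C, ∀ y ∈ C, x + y ∈ C)
    (hC_smul : ∀ r : ℝ, 0 ≤ r → ∀ x ∈ C, r • x ∈ C)
    (hD_add : ∀ x ∈ D, ∀ y ∈ D, x + y ∈ D)
    (hD_smul : ∀ r : ℝ, 0 ≤ r → ∀ x ∈ D, r • x ∈ D)
    (hC_int : (interior C).Nonempty) (hD_int : (interior D).Nonempty)
    (hpos : ∀ c ∈ C, ∀ d ∈ D, 0 ≤ ∑ i, c i * d i)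
    (φ : (Fin n → ℝ) → ℝ)
    (hφ_nonneg : ∀ y ∈ D, 0 ≤ φ y)
    (hφ_add : ∀ y ∈ D, ∀ y' ∈ D, φ (y + y') = φ y + φ y')
    (hφ_smul : ∀ r : ℝ, 0 ≤ r → ∀ y ∈ D, φ (r • y) = r * φ y)
    (hφ_lsc : ∀ r : ℝ, 0 ≤ r → ∃ U : Set (Fin n → ℝ),
      IsOpen[TopologicalSpace.generateFrom
        {S | ∃ x ∈ C, ∃ s : ℝ, 0 ≤ s ∧ S = {y : Fin n → ℝ | s < ∑ i, x i * y i}}] U ∧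
      {y ∈ D | r < φ y} = U ∩ D) :
    ∃! x₀ : Fin n → ℝ, x₀ ∈ C ∧ ∀ y ∈ D, φ y = ∑ i, x₀ i * y i :=
  finite_dimensional_cone_duality_general n C D hC_closed hC_add hC_smul hD_add hD_smul hC_int
    hD_int φ hφ_nonneg hφ_add hφ_smul hφ_lsc
end
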